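/- Let M ⊨ DB₀. The following are equivalent: (1) M satisfies the full collection schema Coll (i.e. Coll(φ) for every L_∈ formula φ); (2) for every elementary extension N of M, M ≺ M* and M* ≺ N (so M ≺ M* ≺ N); (3) for every elementary extension N of M, M* ≺ N. -/
import Mathlib


/- A deep embedding of the first-order language of set theory L_∈ = {∈, =},
   with named variables indexed by ℕ. -/

namespace FOSet

/-- Formulas of L_∈ with variables indexed by ℕ. -/
inductive Fml : Type
  | mem : ℕ → ℕ → Fml
  | eq  : ℕ → ℕ → Fml
  | not : Fml → Fml
  | and : Fml → Fml → Fml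
  | or  : Fml → Fml → Fml
  | imp : Fml → Fml → Fml
  | all : ℕ → Fml → Fml
  | ex  : ℕ → Fml → Fml

namespace Fml

/-- Free variables of a formula. -/
def fv : Fml → Set ℕ
  | mem i j => {i, j}
  | eq i j  => {i, j}
  | not φ   => φ.fv
  | and φ ψ => φ.fv ∪ ψ.fv
  | or φ ψ  => φ.fv ∪ ψ.fv
  | imp φ ψ => φ.fv ∪ ψ.fv
  | all i φ => φ.fv \ {i}
  | ex i φ  => φ.fv \ {i}

end Fml

/-- Satisfaction, in the substructure of `(N, E)` with domain `S`, of a formula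
under a valuation `v` : quantifiers range over `S`. -/
def SatIn {N : Type} (E : N → N → Prop) (S : Set N) : (ℕ → N) → Fml → Prop
  | v, .mem i j => E (v i) (v j)
  | v, .eq i j  => v i = v j
  | v, .not φ   => ¬ SatIn E S v φ
  | v, .and φ ψ => SatIn E S v φ ∧ SatIn E S v ψ
  | v, .or φ ψ  => SatIn E S v φ ∨ SatIn E S v ψ
  | v, .imp φ ψ => SatIn E S v φ → SatIn E S v ψ
  | v, .all i φ => ∀ a ∈ S, SatIn E S (Function.update v i a) φ
  | v, .ex i φ  => ∃ a ∈ S, SatIn E S (Function.update v i a) φ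

/-- Satisfaction in the full structure `(N, E)`. -/
def Sat {N : Type} (E : N → N → Prop) (v : ℕ → N) (φ : Fml) : Prop :=
  SatIn E Set.univ v φ

/-- Δ₀ (= Σ₀ = Π₀) formulas: every quantifier is bounded, i.e. of the form
`∀ x ∈ y` or `∃ x ∈ y`. -/
inductive IsDelta0 : Fml → Prop
  | mem (i j : ℕ) : IsDelta0 (Fml.mem i j)
  | eq (i j : ℕ)  : IsDelta0 (Fml.eq i j)
  | not {φ} : IsDelta0 φ → IsDelta0 φ.not
  | and {φ ψ} : IsDelta0 φ → IsDelta0 ψ → IsDelta0 (φ.and ψ)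
  | or {φ ψ}  : IsDelta0 φ → IsDelta0 ψ → IsDelta0 (φ.or ψ)
  | imp {φ ψ} : IsDelta0 φ → IsDelta0 ψ → IsDelta0 (φ.imp ψ)
  | ball {i j : ℕ} {φ} : i ≠ j → IsDelta0 φ →
      IsDelta0 (Fml.all i ((Fml.mem i j).imp φ))
  | bex {i j : ℕ} {φ} : i ≠ j → IsDelta0 φ →
      IsDelta0 (Fml.ex i ((Fml.mem i j).and φ))

/-- The Lévy hierarchy: `(levels n).1` is the class of Σ_n formulas and
`(levels n).2` the class of Π_n formulas. -/
def levels : ℕ → (Fml → Prop) × (Fml → Prop)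
  | 0 => (IsDelta0, IsDelta0)
  | n + 1 =>
      (fun φ => ∃ i ψ, (levels n).2 ψ ∧ φ = Fml.ex i ψ,
       fun φ => ∃ i ψ, (levels n).1 ψ ∧ φ = Fml.all i ψ)

def IsSigma (n : ℕ) : Fml → Prop := (levels n).1

def IsPi (n : ℕ) : Fml → Prop := (levels n).2

variable {M N : Type}

/-- `p` is the (Kuratowski) pair `{a, b}` in the sense of `E`. -/
def IsPairOf (E : M → M → Prop) (p a b : M) : Prop :=
  ∀ w, E w p ↔ (w = a ∨ w = b)

/-- `z` is the ordered pair `(a, b)` (Kuratowski) in the sense of `E`. -/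
def IsOPairOf (E : M → M → Prop) (z a b : M) : Prop :=
  ∃ s t, IsPairOf E s a a ∧ IsPairOf E t a b ∧ IsPairOf E z s t

/-- Valuation sending variable 0 to `x` and every other variable to `y`;
used for formulas φ(x, y) with free variables among {0, 1}. -/
def val2 (x y : M) : ℕ → M := fun k => if k = 0 then x else y

/-- Valuation sending 0 ↦ x, 1 ↦ y, everything else ↦ v;
used for formulas φ(x, y, v) with free variables among {0, 1, 2}. -/
def val3 (x y v : M) : ℕ → M := fun k => if k = 0 then x else if k = 1 then y else v

/-- `M ⊨ Sep(φ)` for φ = φ(x, v) (x is variable 0, v is variable 1):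
∀v∀p∃q∀x(x∈q ↔ x∈p ∧ φ(x,v)). -/
def SepAx (E : M → M → Prop) (φ : Fml) : Prop :=
  ∀ v p : M, ∃ q : M, ∀ x : M, E x q ↔ (E x p ∧ Sat E (val2 x v) φ)

/-- `M ⊨ Sep⁻(φ)` for a parameter-free φ = φ(x) (x is variable 0). -/
def SepMinusAx (E : M → M → Prop) (φ : Fml) : Prop :=
  ∀ p : M, ∃ q : M, ∀ x : M, E x q ↔ (E x p ∧ Sat E (fun _ => x) φ)

/-- `(M, E) ⊨ DB₀`: extensionality, empty set, pairing, union, cartesian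
product, and Δ₀ separation. -/
def SatDB0 (E : M → M → Prop) : Prop :=
  (∀ a b : M, (∀ x, E x a ↔ E x b) → a = b) ∧
  (∃ e : M, ∀ x, ¬ E x e) ∧
  (∀ a b : M, ∃ p, IsPairOf E p a b) ∧
  (∀ a : M, ∃ u, ∀ x, E x u ↔ ∃ y, E y a ∧ E x y) ∧
  (∀ a b : M, ∃ c, ∀ z, E z c ↔ ∃ x y, E x a ∧ E y b ∧ IsOPairOf E z x y) ∧
  (∀ φ, IsDelta0 φ → φ.fv ⊆ {0, 1} → SepAx E φ)

/-- `M ⊨ Coll(φ)` for φ = φ(x, y, v) (x = var 0, y = var 1, v = var 2):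
∀v∀p(∀x∈p ∃y φ → ∃q ∀x∈p ∃y∈q φ). -/
def CollAx (E : M → M → Prop) (φ : Fml) : Prop :=
  ∀ v p : M, (∀ x, E x p → ∃ y, Sat E (val3 x y v) φ) →
    ∃ q, ∀ x, E x p → ∃ y, E y q ∧ Sat E (val3 x y v) φ

/-- `M ⊨ Coll_s(φ)`: ∀v∀p∃q∀x∈p(∃y φ ↔ ∃y∈q φ). -/
def CollSAx (E : M → M → Prop) (φ : Fml) : Prop :=
  ∀ v p : M, ∃ q, ∀ x, E x p →
    ((∃ y, Sat E (val3 x y v) φ) ↔ ∃ y, E y q ∧ Sat E (val3 x y v) φ)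

/-- `M ⊨ Coll_w(φ)`: ∀v(∀x∃y φ → ∀p∃q∀x∈p∃y∈q φ). -/
def CollWAx (E : M → M → Prop) (φ : Fml) : Prop :=
  ∀ v : M, (∀ x, ∃ y, Sat E (val3 x y v) φ) →
    ∀ p, ∃ q, ∀ x, E x p → ∃ y, E y q ∧ Sat E (val3 x y v) φ

/-- `M ⊨ Coll⁻(φ)` for a parameter-free φ = φ(x, y) (x = var 0, y = var 1). -/
def CollMinusAx (E : M → M → Prop) (φ : Fml) : Prop :=
  ∀ p : M, (∀ x, E x p → ∃ y, Sat E (val2 x y) φ) →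
    ∃ q, ∀ x, E x p → ∃ y, E y q ∧ Sat E (val2 x y) φ

/-- `M ⊨ Coll_w⁻(φ)` for a parameter-free φ = φ(x, y). -/
def CollWMinusAx (E : M → M → Prop) (φ : Fml) : Prop :=
  (∀ x : M, ∃ y, Sat E (val2 x y) φ) →
    ∀ p, ∃ q, ∀ x, E x p → ∃ y, E y q ∧ Sat E (val2 x y) φ

/-- `M ⊨ Coll_s⁻(φ)` for a parameter-free φ = φ(x, y). -/
def CollSMinusAx (E : M → M → Prop) (φ : Fml) : Prop :=
  ∀ p : M, ∃ q, ∀ x, E x p →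
    ((∃ y, Sat E (val2 x y) φ) ↔ ∃ y, E y q ∧ Sat E (val2 x y) φ)

/- Schemas over a class Γ of formulas. -/

def CollScheme (E : M → M → Prop) (Γ : Fml → Prop) : Prop :=
  ∀ φ, Γ φ → φ.fv ⊆ {0, 1, 2} → CollAx E φ

def CollSScheme (E : M → M → Prop) (Γ : Fml → Prop) : Prop :=
  ∀ φ, Γ φ → φ.fv ⊆ {0, 1, 2} → CollSAx E φ

def CollWScheme (E : M → M → Prop) (Γ : Fml → Prop) : Prop :=
  ∀ φ, Γ φ → φ.fv ⊆ {0, 1, 2} → CollWAx E φ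

def CollMinusScheme (E : M → M → Prop) (Γ : Fml → Prop) : Prop :=
  ∀ φ, Γ φ → φ.fv ⊆ {0, 1} → CollMinusAx E φ

def CollWMinusScheme (E : M → M → Prop) (Γ : Fml → Prop) : Prop :=
  ∀ φ, Γ φ → φ.fv ⊆ {0, 1} → CollWMinusAx E φ

def CollSMinusScheme (E : M → M → Prop) (Γ : Fml → Prop) : Prop :=
  ∀ φ, Γ φ → φ.fv ⊆ {0, 1} → CollSMinusAx E φ

def SepScheme (E : M → M → Prop) (Γ : Fml → Prop) : Prop :=
  ∀ φ, Γ φ → φ.fv ⊆ {0, 1} → SepAx E φ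

def SepMinusScheme (E : M → M → Prop) (Γ : Fml → Prop) : Prop :=
  ∀ φ, Γ φ → φ.fv ⊆ {0} → SepMinusAx E φ

/- Extensions. We present an extension `M ⊆ N` by an embedding `f : M → N`. -/

/-- `f` embeds `(M, EM)` as a substructure of `(N, EN)`. -/
def SubStr (EM : M → M → Prop) (EN : N → N → Prop) (f : M → N) : Prop :=
  Function.Injective f ∧ ∀ a b : M, EM a b ↔ EN (f a) (f b)

/-- `f : M → N` is a (fully) elementary embedding. -/
def ElemEmb (EM : M → M → Prop) (EN : N → N → Prop) (f : M → N) : Prop :=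
  ∀ (φ : Fml) (v : ℕ → M), Sat EM v φ ↔ Sat EN (f ∘ v) φ

/-- `f : M → N` is a Σ_n-elementary embedding (M ≺_{Σ_n} N). -/
def SigmaElemEmb (n : ℕ) (EM : M → M → Prop) (EN : N → N → Prop) (f : M → N) : Prop :=
  ∀ φ, IsSigma n φ → ∀ v : ℕ → M, Sat EM v φ ↔ Sat EN (f ∘ v) φ

/-- `f : M → N` is a Δ₀-elementary embedding (M ≺_{Δ₀} N). -/
def Delta0ElemEmb (EM : M → M → Prop) (EN : N → N → Prop) (f : M → N) : Prop :=
  ∀ φ, IsDelta0 φ → ∀ v : ℕ → M, Sat EM v φ ↔ Sat EN (f ∘ v) φ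

/-- The convex hull M* of (the image of) M in N:
{a ∈ N : N ⊨ a ∈ m for some m ∈ M}. -/
def hull (EN : N → N → Prop) (f : M → N) : Set N := {a | ∃ m : M, EN a (f m)}

/-- The substructure of `N` with domain `S` is a Σ_n-elementary substructure of
`N` (S ≺_{Σ_n} N). -/
def SigmaElemInTop (n : ℕ) (EN : N → N → Prop) (S : Set N) : Prop :=
  ∀ φ, IsSigma n φ → ∀ v : ℕ → N, (∀ k, v k ∈ S) → (SatIn EN S v φ ↔ Sat EN v φ)

/-- The substructure of `N` with domain `S` is a fully elementary substructure. -/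
def ElemInTop (EN : N → N → Prop) (S : Set N) : Prop :=
  ∀ (φ : Fml) (v : ℕ → N), (∀ k, v k ∈ S) → (SatIn EN S v φ ↔ Sat EN v φ)

/-- `f` is a Σ_n-elementary embedding of `M` into the substructure of `N` with
domain `S` (e.g. M ≺_{Σ_n} M*). -/
def SigmaElemEmbInto (n : ℕ) (EM : M → M → Prop) (EN : N → N → Prop) (f : M → N)
    (S : Set N) : Prop :=
  ∀ φ, IsSigma n φ → ∀ v : ℕ → M, Sat EM v φ ↔ SatIn EN S (f ∘ v) φ

/-- `f` is a fully elementary embedding of `M` into the substructure of `N`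
with domain `S`. -/
def ElemEmbInto (EM : M → M → Prop) (EN : N → N → Prop) (f : M → N) (S : Set N) : Prop :=
  ∀ (φ : Fml) (v : ℕ → M), Sat EM v φ ↔ SatIn EN S (f ∘ v) φ

/-- The extension presented by `f` is an end extension. -/
def IsEndEmb (EN : N → N → Prop) (f : M → N) : Prop :=
  ∀ (m : M) (a : N), EN a (f m) → ∃ m', f m' = a

/-- The extension presented by `f` is cofinal. -/
def Cofinal (EN : N → N → Prop) (f : M → N) : Prop :=
  ∀ a : N, ∃ m : M, EN a (f m)

/-- `a` is a transitive set in the sense of `(N, EN)`. -/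
def TransIn (EN : N → N → Prop) (a : N) : Prop :=
  ∀ x, EN x a → ∀ y, EN y x → EN y a

/-- The extension presented by `f` is taller. -/
def Taller (EN : N → N → Prop) (f : M → N) : Prop :=
  ∃ a : N, ∀ m : M, EN (f m) a

/-- The extension presented by `f` is taller*. -/
def TallerStar (EN : N → N → Prop) (f : M → N) : Prop :=
  ∃ a : N, (∀ m : M, EN (f m) a) ∧ TransIn EN a

/-- Property end_n: for every elementary extension N of M, M* ≺_{Σ_n} N. -/
def HasEnd (n : ℕ) (EM : M → M → Prop) : Prop :=
  ∀ (N : Type) (EN : N → N → Prop) (f : M → N), ElemEmb EM EN f →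
    SigmaElemInTop n EN (hull EN f)

/-- Property cof_n: for every elementary extension N of M, M ≺_{Σ_n} M*. -/
def HasCof (n : ℕ) (EM : M → M → Prop) : Prop :=
  ∀ (N : Type) (EN : N → N → Prop) (f : M → N), ElemEmb EM EN f →
    SigmaElemEmbInto n EM EN f (hull EN f)

/-- Property COF_n: for every Δ₀-elementary cofinal extension N of M with
N ⊨ DB₀, M ≺_{Σ_n} N. -/
def HasCOF (n : ℕ) (EM : M → M → Prop) : Prop :=
  ∀ (N : Type) (EN : N → N → Prop) (f : M → N), SatDB0 EN →
    Delta0ElemEmb EM EN f → Cofinal EN f → SigmaElemEmb n EM EN f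

/-- TCo: every set is an element of some transitive set. -/
def SatTCo (E : M → M → Prop) : Prop :=
  ∀ a : M, ∃ t, E a t ∧ TransIn E t

/-- `a` is an ordinal in the sense of `(M, E)`: a transitive set linearly
ordered by `E`. -/
def OrdIn (E : M → M → Prop) (a : M) : Prop :=
  TransIn E a ∧ ∀ x y, E x a → E y a → (E x y ∨ x = y ∨ E y x)

/-- The formula φ(p, α, v) (p = var 0, α = var 1, v = var 2), with parameter
`v ∈ M`, defines a resolution on `(M, E)`. -/
def IsResolution (E : M → M → Prop) (φ : Fml) (v : M) : Prop :=
  φ.fv ⊆ {0, 1, 2} ∧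
  (∀ α, OrdIn E α → ∃! p, Sat E (val3 p α v) φ) ∧
  (∀ α β p q, E α β → Sat E (val3 p α v) φ → Sat E (val3 q β v) φ →
    ∀ x, E x p → E x q) ∧
  (∀ x, ∃ α, OrdIn E α ∧ ∀ p, Sat E (val3 p α v) φ → E x p)

end FOSet

namespace FOSet

section Aux
open Fml
variable {M N : Type}

attribute [local instance] Classical.propDecidable

lemma satIn_congr {N : Type} (E : N → N → Prop) (S : Set N) :
    ∀ (φ : Fml) (v w : ℕ → N), (∀ k ∈ φ.fv, v k = w k) →
      (SatIn E S v φ ↔ SatIn E S w φ) := by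
  intro φ
  induction φ with
  | mem i j =>
      intro v w h
      simp only [SatIn, h i (by simp [fv]), h j (by simp [fv])]
  | eq i j =>
      intro v w h
      simp only [SatIn, h i (by simp [fv]), h j (by simp [fv])]
  | not φ ih =>
      intro v w h; simp only [SatIn]; rw [ih v w h]
  | and φ ψ ih1 ih2 =>
      intro v w h
      simp only [SatIn]
      rw [ih1 v w (fun k hk => h k (by simp [fv, hk])),
        ih2 v w (fun k hk => h k (by simp [fv, hk]))]
  | or φ ψ ih1 ih2 =>
      intro v w h
      simp only [SatIn]
      rw [ih1 v w (fun k hk => h k (by simp [fv, hk])),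
        ih2 v w (fun k hk => h k (by simp [fv, hk]))]
  | imp φ ψ ih1 ih2 =>
      intro v w h
      simp only [SatIn]
      rw [ih1 v w (fun k hk => h k (by simp [fv, hk])),
        ih2 v w (fun k hk => h k (by simp [fv, hk]))]
  | all i φ ih =>
      intro v w h
      simp only [SatIn]
      refine forall₂_congr fun a _ => ?_
      refine ih _ _ fun k hk => ?_
      by_cases hki : k = i
      · subst hki; simp [Function.update]
      · rw [Function.update_of_ne hki, Function.update_of_ne hki]
        exact h k (by simp [fv, hk, hki])
  | ex i φ ih =>
      intro v w h
      simp only [SatIn]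
      refine exists_congr fun a => and_congr_right fun _ => ?_
      refine ih _ _ fun k hk => ?_
      by_cases hki : k = i
      · subst hki; simp [Function.update]
      · rw [Function.update_of_ne hki, Function.update_of_ne hki]
        exact h k (by simp [fv, hk, hki])

lemma sat_congr {N : Type} (E : N → N → Prop) (φ : Fml) (v w : ℕ → N)
    (h : ∀ k ∈ φ.fv, v k = w k) : Sat E v φ ↔ Sat E w φ :=
  satIn_congr E Set.univ φ v w h

/-- Max variable (free or bound) of a formula. -/
def Fml.maxVar : Fml → ℕ
  | .mem i j => max i j
  | .eq i j => max i j
  | .not φ => φ.maxVar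
  | .and φ ψ => max φ.maxVar ψ.maxVar
  | .or φ ψ => max φ.maxVar ψ.maxVar
  | .imp φ ψ => max φ.maxVar ψ.maxVar
  | .all i φ => max i φ.maxVar
  | .ex i φ => max i φ.maxVar

lemma le_maxVar : ∀ (φ : Fml), ∀ k ∈ φ.fv, k ≤ φ.maxVar := by
  intro φ
  induction φ with
  | mem i j =>
      intro k hk
      simp only [fv, Set.mem_insert_iff, Set.mem_singleton_iff] at hk
      rcases hk with h | h <;> simp [h, Fml.maxVar]
  | eq i j =>
      intro k hk
      simp only [fv, Set.mem_insert_iff, Set.mem_singleton_iff] at hk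
      rcases hk with h | h <;> simp [h, Fml.maxVar]
  | not φ ih => exact ih
  | and φ ψ ih1 ih2 =>
      intro k hk
      rcases hk with h | h
      · exact le_trans (ih1 k h) (le_max_left _ _)
      · exact le_trans (ih2 k h) (le_max_right _ _)
  | or φ ψ ih1 ih2 =>
      intro k hk
      rcases hk with h | h
      · exact le_trans (ih1 k h) (le_max_left _ _)
      · exact le_trans (ih2 k h) (le_max_right _ _)
  | imp φ ψ ih1 ih2 =>
      intro k hk
      rcases hk with h | h
      · exact le_trans (ih1 k h) (le_max_left _ _)
      · exact le_trans (ih2 k h) (le_max_right _ _)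
  | all i φ ih =>
      intro k hk
      exact le_trans (ih k hk.1) (le_max_right _ _)
  | ex i φ ih =>
      intro k hk
      exact le_trans (ih k hk.1) (le_max_right _ _)

/-- Rename variables along a map. -/
def Fml.rename (ρ : ℕ → ℕ) : Fml → Fml
  | .mem i j => .mem (ρ i) (ρ j)
  | .eq i j => .eq (ρ i) (ρ j)
  | .not φ => .not (φ.rename ρ)
  | .and φ ψ => .and (φ.rename ρ) (ψ.rename ρ)
  | .or φ ψ => .or (φ.rename ρ) (ψ.rename ρ)
  | .imp φ ψ => .imp (φ.rename ρ) (ψ.rename ρ)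
  | .all i φ => .all (ρ i) (φ.rename ρ)
  | .ex i φ => .ex (ρ i) (φ.rename ρ)

lemma satIn_rename {N : Type} (E : N → N → Prop) (S : Set N) (ρ : ℕ → ℕ)
    (hρ : Function.Injective ρ) :
    ∀ (φ : Fml) (v : ℕ → N), SatIn E S v (φ.rename ρ) ↔ SatIn E S (v ∘ ρ) φ := by
  intro φ
  induction φ with
  | mem i j => intro v; simp [Fml.rename, SatIn, Function.comp]
  | eq i j => intro v; simp [Fml.rename, SatIn, Function.comp]
  | not φ ih => intro v; simp only [Fml.rename, SatIn]; rw [ih]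
  | and φ ψ ih1 ih2 => intro v; simp only [Fml.rename, SatIn]; rw [ih1, ih2]
  | or φ ψ ih1 ih2 => intro v; simp only [Fml.rename, SatIn]; rw [ih1, ih2]
  | imp φ ψ ih1 ih2 => intro v; simp only [Fml.rename, SatIn]; rw [ih1, ih2]
  | all i φ ih =>
      intro v
      simp only [Fml.rename, SatIn]
      refine forall₂_congr fun a ha => ?_
      rw [ih]
      refine satIn_congr E S φ _ _ fun k _ => ?_
      by_cases hki : k = i
      · subst hki; simp [Function.comp, Function.update]
      · rw [Function.comp_apply, Function.update_of_ne (fun h => hki (hρ h)),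
          Function.update_of_ne hki]
        rfl
  | ex i φ ih =>
      intro v
      simp only [Fml.rename, SatIn]
      refine exists_congr fun a => and_congr_right fun ha => ?_
      rw [ih]
      refine satIn_congr E S φ _ _ fun k _ => ?_
      by_cases hki : k = i
      · subst hki; simp [Function.comp, Function.update]
      · rw [Function.comp_apply, Function.update_of_ne (fun h => hki (hρ h)),
          Function.update_of_ne hki]
        rfl

lemma mem_fv_rename (ρ : ℕ → ℕ) :
    ∀ (φ : Fml), ∀ k ∈ (φ.rename ρ).fv, ∃ j ∈ φ.fv, ρ j = k := by
  intro φ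
  induction φ with
  | mem i j =>
      intro k hk
      simp only [Fml.rename, fv, Set.mem_insert_iff, Set.mem_singleton_iff] at hk
      rcases hk with h | h
      · exact ⟨i, by simp [fv], h.symm⟩
      · exact ⟨j, by simp [fv], h.symm⟩
  | eq i j =>
      intro k hk
      simp only [Fml.rename, fv, Set.mem_insert_iff, Set.mem_singleton_iff] at hk
      rcases hk with h | h
      · exact ⟨i, by simp [fv], h.symm⟩
      · exact ⟨j, by simp [fv], h.symm⟩
  | not φ ih => exact ih
  | and φ ψ ih1 ih2 =>
      intro k hk
      rcases hk with h | h
      · obtain ⟨j, hj, hjk⟩ := ih1 k h; exact ⟨j, Or.inl hj, hjk⟩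
      · obtain ⟨j, hj, hjk⟩ := ih2 k h; exact ⟨j, Or.inr hj, hjk⟩
  | or φ ψ ih1 ih2 =>
      intro k hk
      rcases hk with h | h
      · obtain ⟨j, hj, hjk⟩ := ih1 k h; exact ⟨j, Or.inl hj, hjk⟩
      · obtain ⟨j, hj, hjk⟩ := ih2 k h; exact ⟨j, Or.inr hj, hjk⟩
  | imp φ ψ ih1 ih2 =>
      intro k hk
      rcases hk with h | h
      · obtain ⟨j, hj, hjk⟩ := ih1 k h; exact ⟨j, Or.inl hj, hjk⟩
      · obtain ⟨j, hj, hjk⟩ := ih2 k h; exact ⟨j, Or.inr hj, hjk⟩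
  | all i φ ih =>
      intro k hk
      obtain ⟨j, hj, hjk⟩ := ih k hk.1
      refine ⟨j, ⟨hj, ?_⟩, hjk⟩
      intro hji
      apply hk.2
      simp only [Set.mem_singleton_iff] at hji ⊢
      rw [← hjk, hji]
  | ex i φ ih =>
      intro k hk
      obtain ⟨j, hj, hjk⟩ := ih k hk.1
      refine ⟨j, ⟨hj, ?_⟩, hjk⟩
      intro hji
      apply hk.2
      simp only [Set.mem_singleton_iff] at hji ⊢
      rw [← hjk, hji]

end Aux


section Toolkit
open Fml
variable {M N : Type}

attribute [local instance] Classical.propDecidable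

/-- Object-language iff. -/
def Fml.iff (φ ψ : Fml) : Fml := (φ.imp ψ).and (ψ.imp φ)

lemma satIn_iff (E : N → N → Prop) (S : Set N) (v : ℕ → N) (φ ψ : Fml) :
    SatIn E S v (φ.iff ψ) ↔ (SatIn E S v φ ↔ SatIn E S v ψ) := by
  simp only [Fml.iff, SatIn]; tauto

lemma fv_iff (φ ψ : Fml) : (φ.iff ψ).fv = φ.fv ∪ ψ.fv := by
  simp only [Fml.iff, fv]
  ext k; simp; tauto

/-- τ_pair: "s = {a, b}", using w as a bound variable. -/
def pairEqFml (s a b w : ℕ) : Fml :=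
  Fml.all w ((Fml.mem w s).iff ((Fml.eq w a).or (Fml.eq w b)))

lemma fv_pairEqFml (s a b w : ℕ) : (pairEqFml s a b w).fv ⊆ {s, a, b} := by
  intro k hk
  simp only [pairEqFml, fv, fv_iff, Set.mem_diff, Set.mem_union,
    Set.mem_insert_iff, Set.mem_singleton_iff] at hk ⊢
  tauto

lemma sat_pairEqFml (E : N → N → Prop) (v : ℕ → N) {s a b w : ℕ}
    (hs : w ≠ s) (ha : w ≠ a) (hb : w ≠ b) :
    Sat E v (pairEqFml s a b w) ↔ IsPairOf E (v s) (v a) (v b) := by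
  have h : Sat E v (pairEqFml s a b w) ↔
      ∀ x, x ∈ Set.univ → SatIn E Set.univ (Function.update v w x)
        ((Fml.mem w s).iff ((Fml.eq w a).or (Fml.eq w b))) := Iff.rfl
  rw [h]
  simp only [Set.mem_univ, forall_const, satIn_iff, SatIn]
  refine forall_congr' fun x => ?_
  rw [Function.update_self, Function.update_of_ne (Ne.symm hs),
    Function.update_of_ne (Ne.symm ha), Function.update_of_ne (Ne.symm hb)]

/-- "var z = ⟨var a, var b⟩" (Kuratowski), using bound vars B, B+1, B+2. -/
def opFml (z a b B : ℕ) : Fml :=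
  Fml.ex B (Fml.ex (B+1)
    ((pairEqFml B a a (B+2)).and ((pairEqFml (B+1) a b (B+2)).and
      (pairEqFml z B (B+1) (B+2)))))

lemma fv_opFml (z a b B : ℕ) (hz : z < B) (ha : a < B) (hb : b < B) :
    (opFml z a b B).fv ⊆ {z, a, b} := by
  intro k hk
  simp only [opFml, fv, Set.mem_diff, Set.mem_union, Set.mem_singleton_iff] at hk
  obtain ⟨⟨hk1, hk2⟩, hk3⟩ := hk
  simp only [Set.mem_insert_iff, Set.mem_singleton_iff]
  rcases hk1 with h | h | h
  · have := fv_pairEqFml B a a (B+2) h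
    simp only [Set.mem_insert_iff, Set.mem_singleton_iff] at this
    rcases this with h | h | h
    · exact absurd h hk3
    · tauto
    · tauto
  · have := fv_pairEqFml (B+1) a b (B+2) h
    simp only [Set.mem_insert_iff, Set.mem_singleton_iff] at this
    rcases this with h | h | h
    · exact absurd h hk2
    · tauto
    · tauto
  · have := fv_pairEqFml z B (B+1) (B+2) h
    simp only [Set.mem_insert_iff, Set.mem_singleton_iff] at this
    rcases this with h | h | h
    · tauto
    · exact absurd h hk3
    · exact absurd h hk2

lemma sat_opFml (E : N → N → Prop) (v : ℕ → N) {z a b B : ℕ}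
    (hz : z < B) (ha : a < B) (hb : b < B) :
    Sat E v (opFml z a b B) ↔ IsOPairOf E (v z) (v a) (v b) := by
  have hBB : B ≠ B + 1 := by omega
  have hiff : Sat E v (opFml z a b B) ↔
      ∃ s, s ∈ Set.univ ∧ ∃ t, t ∈ Set.univ ∧
        (Sat E (Function.update (Function.update v B s) (B+1) t) (pairEqFml B a a (B+2)) ∧
         Sat E (Function.update (Function.update v B s) (B+1) t) (pairEqFml (B+1) a b (B+2)) ∧
         Sat E (Function.update (Function.update v B s) (B+1) t) (pairEqFml z B (B+1) (B+2))) :=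
    Iff.rfl
  have key : ∀ s t : N,
      (Sat E (Function.update (Function.update v B s) (B+1) t) (pairEqFml B a a (B+2)) ∧
       Sat E (Function.update (Function.update v B s) (B+1) t) (pairEqFml (B+1) a b (B+2)) ∧
       Sat E (Function.update (Function.update v B s) (B+1) t) (pairEqFml z B (B+1) (B+2))) ↔
      (IsPairOf E s (v a) (v a) ∧ IsPairOf E t (v a) (v b) ∧ IsPairOf E (v z) s t) := by
    intro s t
    set u := Function.update (Function.update v B s) (B+1) t with hu
    have eB : u B = s := by rw [hu, Function.update_of_ne hBB, Function.update_self]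
    have eB1 : u (B+1) = t := by rw [hu, Function.update_self]
    have ea : u a = v a := by
      rw [hu, Function.update_of_ne (by omega : a ≠ B+1), Function.update_of_ne (by omega : a ≠ B)]
    have eb : u b = v b := by
      rw [hu, Function.update_of_ne (by omega : b ≠ B+1), Function.update_of_ne (by omega : b ≠ B)]
    have ez : u z = v z := by
      rw [hu, Function.update_of_ne (by omega : z ≠ B+1), Function.update_of_ne (by omega : z ≠ B)]
    rw [sat_pairEqFml E u (s := B) (a := a) (b := a) (by omega) (by omega) (by omega),
      sat_pairEqFml E u (s := B+1) (a := a) (b := b) (by omega) (by omega) (by omega),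
      sat_pairEqFml E u (s := z) (a := B) (b := B+1) (by omega) (by omega) (by omega),
      eB, eB1, ea, eb, ez]
  rw [hiff]
  simp only [Set.mem_univ, true_and]
  constructor
  · rintro ⟨s, t, h⟩
    obtain ⟨h1, h2, h3⟩ := (key s t).mp h
    exact ⟨s, t, h1, h2, h3⟩
  · rintro ⟨s, t, h1, h2, h3⟩
    exact ⟨s, t, (key s t).mpr ⟨h1, h2, h3⟩⟩

/-- `c` codes the tuple of the list `L` (right-nested ordered pairs). -/
def IsTupleOf (E : M → M → Prop) : M → List M → Prop
  | _, [] => True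
  | c, [a] => c = a
  | c, a :: b :: rest => ∃ w, IsOPairOf E c a w ∧ IsTupleOf E w (b :: rest)

/-- Formula "var c codes the tuple of vars L", bound vars ≥ B. -/
def tupFml : ℕ → List ℕ → ℕ → Fml
  | c, [], _ => Fml.eq c c
  | c, [k], _ => Fml.eq c k
  | c, k :: k2 :: rest, B => Fml.ex B ((opFml c k B (B+2)).and (tupFml B (k2 :: rest) (B+8)))

lemma opair_inj {E : M → M → Prop} {z a b a' b' : M}
    (h : IsOPairOf E z a b) (h' : IsOPairOf E z a' b') : a = a' ∧ b = b' := by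
  obtain ⟨s, t, hs, ht, hz⟩ := h
  obtain ⟨s', t', hs', ht', hz'⟩ := h'
  have haa : a = a' := by
    have hsz : E s z := (hz s).mpr (Or.inl rfl)
    rcases (hz' s).mp hsz with h | h
    · -- s = s'
      have : E a s := (hs a).mpr (Or.inl rfl)
      rw [h] at this
      rcases (hs' a).mp this with h2 | h2 <;> exact h2
    · -- s = t'
      have : E a' t' := (ht' a').mpr (Or.inl rfl)
      rw [← h] at this
      rcases (hs a').mp this with h2 | h2 <;> exact h2.symm
  refine ⟨haa, ?_⟩
  have htz : E t z := (hz t).mpr (Or.inr rfl)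
  have hbt : E b t := (ht b).mpr (Or.inr rfl)
  rcases (hz' t).mp htz with h | h
  · -- t = s'
    have hba' : b = a' := by
      rw [h] at hbt
      rcases (hs' b).mp hbt with h2 | h2 <;> exact h2
    have ht'z : E t' z := (hz' t').mpr (Or.inr rfl)
    rcases (hz t').mp ht'z with h2 | h2
    · -- t' = s
      have : E b' t' := (ht' b').mpr (Or.inr rfl)
      rw [h2] at this
      rcases (hs b').mp this with h3 | h3 <;>
        (rw [hba', ← haa]; exact h3.symm)
    · -- t' = t = s'
      have : E b' t' := (ht' b').mpr (Or.inr rfl)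
      rw [h2, h] at this
      rcases (hs' b').mp this with h3 | h3 <;> (rw [hba']; exact h3.symm)
  · -- t = t'
    rw [h] at hbt
    rcases (ht' b).mp hbt with h2 | h2
    · -- b = a'
      have : E b' t' := (ht' b').mpr (Or.inr rfl)
      rw [← h] at this
      rcases (ht b').mp this with h3 | h3
      · rw [h2, ← haa, ← h3]
      · exact h3.symm
    · exact h2

lemma tuple_inj {E : M → M → Prop} :
    ∀ (L L' : List M) (c : M), L.length = L'.length →
      IsTupleOf E c L → IsTupleOf E c L' → L = L' := by
  intro L
  induction L with
  | nil => intro L' c hlen _ _; cases L' with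
      | nil => rfl
      | cons a t => simp at hlen
  | cons a L ih =>
      intro L' c hlen h h'
      cases L' with
      | nil => simp at hlen
      | cons a' L'' =>
        cases L with
        | nil =>
          cases L'' with
          | nil =>
            simp only [IsTupleOf] at h h'
            rw [← h, h']
          | cons x xs => simp at hlen
        | cons b rest =>
          cases L'' with
          | nil => simp at hlen
          | cons b' rest' =>
            simp only [IsTupleOf] at h h'
            obtain ⟨w, hw1, hw2⟩ := h
            obtain ⟨w', hw1', hw2'⟩ := h'
            obtain ⟨haa, hww⟩ := opair_inj hw1 hw1'
            subst hww
            have := ih (b' :: rest') w (by simpa using hlen) hw2 hw2'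
            rw [haa, this]

lemma sat_tupFml (E : N → N → Prop) :
    ∀ (L : List ℕ) (c B : ℕ), c < B → (∀ k ∈ L, k < B) → ∀ v : ℕ → N,
      (Sat E v (tupFml c L B) ↔ IsTupleOf E (v c) (L.map v)) := by
  intro L
  induction L with
  | nil => intro c B hc hL v; simp [tupFml, Sat, SatIn, IsTupleOf]
  | cons k L ih =>
      intro c B hc hL v
      cases L with
      | nil => simp [tupFml, Sat, SatIn, IsTupleOf]
      | cons k2 rest =>
        have hk : k < B := hL k (by simp)
        have hiff : Sat E v (tupFml c (k :: k2 :: rest) B) ↔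
            ∃ w, w ∈ Set.univ ∧
              (Sat E (Function.update v B w) (opFml c k B (B+2)) ∧
               Sat E (Function.update v B w) (tupFml B (k2 :: rest) (B+8))) := Iff.rfl
        rw [hiff]
        simp only [Set.mem_univ, true_and]
        have key : ∀ w : N,
            (Sat E (Function.update v B w) (opFml c k B (B+2)) ∧
             Sat E (Function.update v B w) (tupFml B (k2 :: rest) (B+8))) ↔
            (IsOPairOf E (v c) (v k) w ∧ IsTupleOf E w (List.map v (k2 :: rest))) := by
          intro w
          rw [sat_opFml E _ (by omega) (by omega) (by omega),
            ih B (B+8) (by omega)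
              (fun j hj => by have := hL j (List.mem_cons_of_mem _ hj); omega)]
          rw [Function.update_of_ne (by omega : c ≠ B), Function.update_of_ne (by omega : k ≠ B),
            Function.update_self]
          have hmap : List.map (Function.update v B w) (k2 :: rest) = List.map v (k2 :: rest) := by
            apply List.map_congr_left
            intro j hj
            exact Function.update_of_ne
              (by have := hL j (List.mem_cons_of_mem _ hj); omega) _ _
          rw [hmap]
        constructor
        · rintro ⟨w, h⟩
          obtain ⟨h1, h2⟩ := (key w).mp h
          exact ⟨w, h1, h2⟩
        · rintro ⟨w, h1, h2⟩
          exact ⟨w, (key w).mpr ⟨h1, h2⟩⟩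

lemma fv_tupFml :
    ∀ (L : List ℕ) (c B : ℕ), c < B → (∀ k ∈ L, k < B) →
      (tupFml c L B).fv ⊆ insert c {k | k ∈ L} := by
  intro L
  induction L with
  | nil =>
      intro c B _ _ k hk
      simp only [tupFml, fv, Set.mem_insert_iff, Set.mem_singleton_iff] at hk ⊢
      tauto
  | cons k L ih =>
      intro c B hc hL j hj
      cases L with
      | nil =>
        simp only [tupFml, fv, Set.mem_insert_iff, Set.mem_singleton_iff,
          Set.mem_setOf_eq] at hj ⊢
        rcases hj with h | h
        · tauto
        · right; simp [h]
      | cons k2 rest =>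
        have hk : k < B := hL k (by simp)
        simp only [tupFml, fv, Set.mem_diff, Set.mem_union] at hj
        obtain ⟨hj1, hj2⟩ := hj
        simp only [Set.mem_singleton_iff] at hj2
        simp only [Set.mem_insert_iff, Set.mem_setOf_eq]
        rcases hj1 with h | h
        · have := fv_opFml c k B (B+2) (by omega) (by omega) (by omega) h
          simp only [Set.mem_insert_iff, Set.mem_singleton_iff] at this
          rcases this with h | h | h
          · tauto
          · right; simp [h]
          · exact absurd h hj2
        · have := ih B (B+8) (by omega)
            (fun j hj => by have := hL j (List.mem_cons_of_mem _ hj); omega) h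
          simp only [Set.mem_insert_iff, Set.mem_setOf_eq] at this
          rcases this with h | h
          · exact absurd h hj2
          · right; simp [h]

/-- Existence of tuples from pairing. -/
lemma exists_opair {E : M → M → Prop} (hpair : ∀ a b : M, ∃ p, IsPairOf E p a b)
    (a b : M) : ∃ z, IsOPairOf E z a b := by
  obtain ⟨s, hs⟩ := hpair a a
  obtain ⟨t, ht⟩ := hpair a b
  obtain ⟨z, hz⟩ := hpair s t
  exact ⟨z, s, t, hs, ht, hz⟩

lemma exists_tuple {E : M → M → Prop} (hpair : ∀ a b : M, ∃ p, IsPairOf E p a b)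
    (m0 : M) : ∀ L : List M, ∃ c, IsTupleOf E c L := by
  intro L
  induction L with
  | nil => exact ⟨m0, trivial⟩
  | cons a L ih =>
      cases L with
      | nil => exact ⟨a, rfl⟩
      | cons b rest =>
        obtain ⟨w, hw⟩ := ih
        obtain ⟨z, hz⟩ := exists_opair hpair a w
        exact ⟨z, w, hz, hw⟩

/-- Iterated existential quantifier. -/
def bigEx (L : List ℕ) (φ : Fml) : Fml := L.foldr Fml.ex φ

lemma sat_bigEx (E : N → N → Prop) :
    ∀ (L : List ℕ) (φ : Fml) (v : ℕ → N),
      Sat E v (bigEx L φ) ↔ ∃ w : ℕ → N, (∀ k, k ∉ L → w k = v k) ∧ Sat E w φ := by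
  intro L
  induction L with
  | nil =>
      intro φ v
      simp only [bigEx, List.foldr]
      constructor
      · intro h; exact ⟨v, fun k _ => rfl, h⟩
      · rintro ⟨w, hw, h⟩
        rwa [sat_congr E φ v w (fun k _ => (hw k (by simp)).symm)]
  | cons k L ih =>
      intro φ v
      simp only [bigEx, List.foldr] at *
      show (∃ a ∈ Set.univ, Sat E (Function.update v k a) (List.foldr Fml.ex φ L)) ↔ _
      simp only [Set.mem_univ, true_and]
      constructor
      · rintro ⟨a, h⟩
        rw [ih] at h
        obtain ⟨w, hw, h⟩ := h
        refine ⟨w, fun j hj => ?_, h⟩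
        have hjk : j ≠ k := by simp at hj; tauto
        have hjL : j ∉ L := by simp at hj; tauto
        rw [hw j hjL, Function.update_of_ne hjk]
      · rintro ⟨w, hw, h⟩
        refine ⟨w k, ?_⟩
        rw [ih]
        refine ⟨w, fun j hj => ?_, h⟩
        by_cases hjk : j = k
        · subst hjk; rw [Function.update_self]
        · rw [Function.update_of_ne hjk]
          exact hw j (by simp [hjk, hj])

lemma fv_bigEx :
    ∀ (L : List ℕ) (φ : Fml) (k : ℕ), k ∈ (bigEx L φ).fv → k ∈ φ.fv ∧ k ∉ L := by
  intro L
  induction L with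
  | nil => intro φ k hk; exact ⟨hk, by simp⟩
  | cons j L ih =>
      intro φ k hk
      simp only [bigEx, List.foldr] at hk
      have hk' : k ∈ (bigEx L φ).fv ∧ k ≠ j := by
        obtain ⟨h1, h2⟩ := hk
        exact ⟨h1, by simpa using h2⟩
      obtain ⟨h1, h2⟩ := ih φ k hk'.1
      exact ⟨h1, by simp [hk'.2, h2]⟩

end Toolkit


section Transfer
open Fml
variable {M N : Type}

attribute [local instance] Classical.propDecidable

lemma db0_nonempty {EM : M → M → Prop} (hM : SatDB0 EM) : Nonempty M :=
  ⟨hM.2.1.choose⟩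

lemma db0_pair {EM : M → M → Prop} (hM : SatDB0 EM) :
    ∀ a b : M, ∃ p, IsPairOf EM p a b := hM.2.2.1

lemma db0_binUnion {EM : M → M → Prop} (hM : SatDB0 EM) (a b : M) :
    ∃ u, ∀ x, EM x u ↔ (EM x a ∨ EM x b) := by
  obtain ⟨p, hp⟩ := db0_pair hM a b
  obtain ⟨u, hu⟩ := hM.2.2.2.1 p
  refine ⟨u, fun x => ?_⟩
  rw [hu x]
  constructor
  · rintro ⟨y, hy1, hy2⟩
    rcases (hp y).mp hy1 with h | h
    · subst h; exact Or.inl hy2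
    · subst h; exact Or.inr hy2
  · rintro (h | h)
    · exact ⟨a, (hp a).mpr (Or.inl rfl), h⟩
    · exact ⟨b, (hp b).mpr (Or.inr rfl), h⟩

lemma db0_listBound {EM : M → M → Prop} (hM : SatDB0 EM) :
    ∀ l : List M, ∃ q, ∀ m ∈ l, ∀ y, EM y m → EM y q := by
  intro l
  induction l with
  | nil =>
      obtain ⟨e, he⟩ := hM.2.1
      exact ⟨e, by simp⟩
  | cons m l ih =>
      obtain ⟨q, hq⟩ := ih
      obtain ⟨u, hu⟩ := db0_binUnion hM m q
      refine ⟨u, fun m' hm' y hy => ?_⟩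
      rcases List.mem_cons.mp hm' with h | h
      · subst h; exact (hu y).mpr (Or.inl hy)
      · exact (hu y).mpr (Or.inr (hq m' h y hy))

lemma transfer_mem {EM : M → M → Prop} {EN : N → N → Prop} {f : M → N}
    (hf : ElemEmb EM EN f) {a b : M} (h : EM a b) : EN (f a) (f b) := by
  have h0 : Sat EM (val2 a b) (Fml.mem 0 1) ↔ EM a b := by simp [Sat, SatIn, val2]
  have h1 : Sat EN (f ∘ val2 a b) (Fml.mem 0 1) ↔ EN (f a) (f b) := by
    simp [Sat, SatIn, val2, Function.comp]
  exact h1.mp ((hf (Fml.mem 0 1) (val2 a b)).mp (h0.mpr h))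

lemma hull_mem_f {EM : M → M → Prop} {EN : N → N → Prop} {f : M → N}
    (hM : SatDB0 EM) (hf : ElemEmb EM EN f) (m : M) : f m ∈ hull EN f := by
  obtain ⟨p, hp⟩ := db0_pair hM m m
  exact ⟨p, transfer_mem hf ((hp m).mpr (Or.inl rfl))⟩

/-- Sentence: every two sets have a pair. -/
def pairSentence : Fml := Fml.all 0 (Fml.all 1 (Fml.ex 2 (pairEqFml 2 0 1 3)))

lemma sat_pairSentence (E : N → N → Prop) (v : ℕ → N) :
    Sat E v pairSentence ↔ ∀ a b : N, ∃ p, IsPairOf E p a b := by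
  have hiff : Sat E v pairSentence ↔
      ∀ a, a ∈ Set.univ → ∀ b, b ∈ Set.univ → ∃ p, p ∈ Set.univ ∧
        Sat E (Function.update (Function.update (Function.update v 0 a) 1 b) 2 p)
          (pairEqFml 2 0 1 3) := Iff.rfl
  rw [hiff]
  simp only [Set.mem_univ, true_and, forall_const]
  refine forall_congr' fun a => forall_congr' fun b => exists_congr fun p => ?_
  rw [sat_pairEqFml E _ (by omega) (by omega) (by omega)]
  set u := Function.update (Function.update (Function.update v 0 a) 1 b) 2 p with hu
  have e2 : u 2 = p := by rw [hu, Function.update_self]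
  have e0 : u 0 = a := by
    rw [hu, Function.update_of_ne (by omega : (0:ℕ) ≠ 2),
      Function.update_of_ne (by omega : (0:ℕ) ≠ 1), Function.update_self]
  have e1 : u 1 = b := by
    rw [hu, Function.update_of_ne (by omega : (1:ℕ) ≠ 2), Function.update_self]
  rw [e0, e1, e2]

lemma pairs_in_ext {EM : M → M → Prop} {EN : N → N → Prop} {f : M → N}
    (hM : SatDB0 EM) (hf : ElemEmb EM EN f) :
    ∀ a b : N, ∃ p, IsPairOf EN p a b := by
  have m0 := (db0_nonempty hM).some
  have h1 : Sat EM (fun _ => m0) pairSentence :=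
    (sat_pairSentence EM _).mpr (db0_pair hM)
  have h2 : Sat EN (f ∘ fun _ => m0) pairSentence := (hf pairSentence _).mp h1
  exact (sat_pairSentence EN _).mp h2

/-- Formula: "var 2 = var 0 × var 1". -/
def prodFml : Fml :=
  Fml.all 3 ((Fml.mem 3 2).iff
    (Fml.ex 4 (Fml.ex 5 ((Fml.mem 4 0).and ((Fml.mem 5 1).and (opFml 3 4 5 6))))))

lemma sat_prodFml (E : N → N → Prop) (v : ℕ → N) :
    Sat E v prodFml ↔
      ∀ z, E z (v 2) ↔ ∃ x y, E x (v 0) ∧ E y (v 1) ∧ IsOPairOf E z x y := by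
  have hiff : Sat E v prodFml ↔ ∀ z, z ∈ Set.univ →
      SatIn E Set.univ (Function.update v 3 z)
        ((Fml.mem 3 2).iff
          (Fml.ex 4 (Fml.ex 5 ((Fml.mem 4 0).and ((Fml.mem 5 1).and (opFml 3 4 5 6)))))) :=
    Iff.rfl
  rw [hiff]
  simp only [Set.mem_univ, forall_const, satIn_iff]
  refine forall_congr' fun z => ?_
  set u := Function.update v 3 z with hu
  have hmem : SatIn E Set.univ u (Fml.mem 3 2) ↔ E z (v 2) := by
    have : SatIn E Set.univ u (Fml.mem 3 2) = E (u 3) (u 2) := rfl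
    rw [this, hu, Function.update_self, Function.update_of_ne (by omega : (2:ℕ) ≠ 3)]
  have hex : SatIn E Set.univ u
      (Fml.ex 4 (Fml.ex 5 ((Fml.mem 4 0).and ((Fml.mem 5 1).and (opFml 3 4 5 6))))) ↔
      ∃ x y, E x (v 0) ∧ E y (v 1) ∧ IsOPairOf E z x y := by
    have h0 : SatIn E Set.univ u
        (Fml.ex 4 (Fml.ex 5 ((Fml.mem 4 0).and ((Fml.mem 5 1).and (opFml 3 4 5 6))))) ↔
        ∃ x, x ∈ Set.univ ∧ ∃ y, y ∈ Set.univ ∧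
          (SatIn E Set.univ (Function.update (Function.update u 4 x) 5 y) (Fml.mem 4 0) ∧
           SatIn E Set.univ (Function.update (Function.update u 4 x) 5 y) (Fml.mem 5 1) ∧
           Sat E (Function.update (Function.update u 4 x) 5 y) (opFml 3 4 5 6)) := Iff.rfl
    rw [h0]
    simp only [Set.mem_univ, true_and]
    refine exists_congr fun x => exists_congr fun y => ?_
    set u2 := Function.update (Function.update u 4 x) 5 y with hu2
    have e4 : u2 4 = x := by
      rw [hu2, Function.update_of_ne (by omega : (4:ℕ) ≠ 5), Function.update_self]
    have e5 : u2 5 = y := by rw [hu2, Function.update_self]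
    have e0 : u2 0 = v 0 := by
      rw [hu2, Function.update_of_ne (by omega : (0:ℕ) ≠ 5),
        Function.update_of_ne (by omega : (0:ℕ) ≠ 4), hu,
        Function.update_of_ne (by omega : (0:ℕ) ≠ 3)]
    have e1 : u2 1 = v 1 := by
      rw [hu2, Function.update_of_ne (by omega : (1:ℕ) ≠ 5),
        Function.update_of_ne (by omega : (1:ℕ) ≠ 4), hu,
        Function.update_of_ne (by omega : (1:ℕ) ≠ 3)]
    have e3 : u2 3 = z := by
      rw [hu2, Function.update_of_ne (by omega : (3:ℕ) ≠ 5),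
        Function.update_of_ne (by omega : (3:ℕ) ≠ 4), hu, Function.update_self]
    have hm40 : SatIn E Set.univ u2 (Fml.mem 4 0) = E (u2 4) (u2 0) := rfl
    have hm51 : SatIn E Set.univ u2 (Fml.mem 5 1) = E (u2 5) (u2 1) := rfl
    rw [hm40, hm51, sat_opFml E u2 (by omega) (by omega) (by omega), e4, e5, e0, e1, e3]
  rw [hmem, hex]

/-- Coding tuples of hull elements by a product set from the ground model. -/
lemma exists_code {EM : M → M → Prop} {EN : N → N → Prop} {f : M → N}
    (hM : SatDB0 EM) (hf : ElemEmb EM EN f) :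
    ∀ (ms : List M) (Lv : List N), List.Forall₂ (fun n m => EN n (f m)) Lv ms →
      ∃ (P : M) (c : N), IsTupleOf EN c Lv ∧ EN c (f P) := by
  intro ms
  induction ms with
  | nil =>
      intro Lv hF
      cases hF
      have m0 := (db0_nonempty hM).some
      obtain ⟨p, hp⟩ := db0_pair hM m0 m0
      exact ⟨p, f m0, trivial, transfer_mem hf ((hp m0).mpr (Or.inl rfl))⟩
  | cons m ms ih =>
      intro Lv hF
      cases hF with
      | cons hn hF' =>
        rename_i n Lv'
        cases ms with
        | nil =>
            cases hF'
            exact ⟨m, n, rfl, hn⟩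
        | cons m2 ms2 =>
            obtain ⟨P', c', htup', hmem'⟩ := ih _ hF'
            obtain ⟨C, hC⟩ := hM.2.2.2.2.1 m P'
            have hsatM : Sat EM (val3 m P' C) prodFml := by
              rw [sat_prodFml]
              intro zz
              have h0 : val3 m P' C 0 = m := rfl
              have h1 : val3 m P' C 1 = P' := rfl
              have h2 : val3 m P' C 2 = C := rfl
              rw [h0, h1, h2] at *
              exact hC zz
            have hsatN : Sat EN (f ∘ val3 m P' C) prodFml := (hf prodFml _).mp hsatM
            rw [sat_prodFml] at hsatN
            have hch : ∀ z, EN z (f C) ↔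
                ∃ x y, EN x (f m) ∧ EN y (f P') ∧ IsOPairOf EN z x y := by
              intro z
              have e0 : (f ∘ val3 m P' C) 0 = f m := rfl
              have e1 : (f ∘ val3 m P' C) 1 = f P' := rfl
              have e2 : (f ∘ val3 m P' C) 2 = f C := rfl
              rw [e0, e1, e2] at hsatN
              exact hsatN z
            obtain ⟨c, hc⟩ := exists_opair (pairs_in_ext hM hf) n c'
            refine ⟨C, c, ?_, ?_⟩
            · cases hF' with
              | cons _ _ => exact ⟨c', hc, htup'⟩
            · exact (hch c).mpr ⟨n, c', hn, hmem', hc⟩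

end Transfer


section GenColl
open Fml
variable {M : Type}

attribute [local instance] Classical.propDecidable

private lemma list_map_eq_iff {α β : Type*} (f g : α → β) :
    ∀ l : List α, List.map f l = List.map g l ↔ ∀ a ∈ l, f a = g a := by
  intro l
  induction l with
  | nil => simp
  | cons a l ih => simp [ih]

/-- Semantic collection for arbitrary formulas, arbitrary variable positions and
arbitrary valuations, derived from the official 3-variable collection schema. -/
lemma genColl {EM : M → M → Prop} (hM : SatDB0 EM) (hColl : CollScheme EM (fun _ => True))
    (ψ : Fml) (xi yi : ℕ) (hxy : xi ≠ yi) (v₀ : ℕ → M) (p : M)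
    (hprem : ∀ x, EM x p → ∃ y,
      Sat EM (Function.update (Function.update v₀ xi x) yi y) ψ) :
    ∃ q, ∀ x, EM x p → ∃ y, EM y q ∧
      Sat EM (Function.update (Function.update v₀ xi x) yi y) ψ := by
  classical
  have m0 := (db0_nonempty hM).some
  set K := max ψ.maxVar (max xi yi) with hK
  have hxiK : xi ≤ K := le_trans (le_max_left _ _) (le_max_right _ _)
  have hyiK : yi ≤ K := le_trans (le_max_right _ _) (le_max_right _ _)
  have hmvK : ψ.maxVar ≤ K := le_max_left _ _
  set Lvars := (List.range (K+1)).filter (fun k => decide (k ≠ xi ∧ k ≠ yi)) with hLv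
  have hmemLv : ∀ j, j ∈ Lvars ↔ (j < K + 1 ∧ j ≠ xi ∧ j ≠ yi) := by
    intro j
    simp [hLv, List.mem_filter, List.mem_range]
  set L3 := Lvars.map (· + 3) with hL3
  have hmemL3 : ∀ k, k ∈ L3 ↔ ∃ j ∈ Lvars, j + 3 = k := by
    intro k; simp [hL3]
  have hL3ge : ∀ k ∈ L3, 3 ≤ k := by
    intro k hk; obtain ⟨j, _, hj⟩ := (hmemL3 k).mp hk; omega
  have hL3lt : ∀ k ∈ L3, k < K + 4 := by
    intro k hk; obtain ⟨j, hj1, hj2⟩ := (hmemL3 k).mp hk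
    have := ((hmemLv j).mp hj1).1; omega
  obtain ⟨vcode, hvc⟩ := exists_tuple (db0_pair hM) m0 (Lvars.map v₀)
  set ψ' := ψ.rename (· + 3) with hψ'
  set B := K + 4 with hB
  set body := (Fml.eq (xi+3) 0).and ((Fml.eq (yi+3) 1).and
    ((tupFml 2 L3 B).and ψ')) with hbody
  set χ := bigEx ((xi+3) :: (yi+3) :: L3) body with hχ
  have hinj : Function.Injective (fun k : ℕ => k + 3) := fun a b h => by simpa using h
  -- the free variables of χ are among {0,1,2}
  have hχfv : χ.fv ⊆ {0, 1, 2} := by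
    intro k hk
    obtain ⟨hk1, hk2⟩ := fv_bigEx _ _ _ hk
    have hkxi : k ≠ xi + 3 := fun h => hk2 (by simp [h])
    have hkyi : k ≠ yi + 3 := fun h => hk2 (by simp [h])
    have hkL3 : k ∉ L3 := fun h => hk2 (by simp [h])
    rw [hbody] at hk1
    simp only [fv, Set.mem_union] at hk1
    simp only [Set.mem_insert_iff, Set.mem_singleton_iff]
    rcases hk1 with h | h | h | h
    · rcases h with h | h
      · exact absurd h hkxi
      · simp at h; tauto
    · rcases h with h | h
      · exact absurd h hkyi
      · simp at h; tauto
    · have := fv_tupFml L3 2 B (by omega) hL3lt h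
      simp only [Set.mem_insert_iff, Set.mem_setOf_eq] at this
      rcases this with h | h
      · tauto
      · exact absurd h hkL3
    · obtain ⟨j, hj1, hj2⟩ := mem_fv_rename _ ψ k h
      have hjK : j ≤ K := le_trans (le_maxVar ψ j hj1) hmvK
      by_cases hjx : j = xi
      · exact absurd (by omega : k = xi + 3) hkxi
      by_cases hjy : j = yi
      · exact absurd (by omega : k = yi + 3) hkyi
      have : j ∈ Lvars := (hmemLv j).mpr ⟨by omega, hjx, hjy⟩
      exact absurd ((hmemL3 k).mpr ⟨j, this, hj2⟩) hkL3
  -- key semantic equivalence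
  have key : ∀ x y : M, Sat EM (val3 x y vcode) χ ↔
      Sat EM (Function.update (Function.update v₀ xi x) yi y) ψ := by
    intro x y
    set tgt := Function.update (Function.update v₀ xi x) yi y with htgt
    have htgt_xi : tgt xi = x := by
      rw [htgt, Function.update_of_ne hxy, Function.update_self]
    have htgt_yi : tgt yi = y := by rw [htgt, Function.update_self]
    have htgt_other : ∀ j, j ≠ xi → j ≠ yi → tgt j = v₀ j := by
      intro j h1 h2
      rw [htgt, Function.update_of_ne h2, Function.update_of_ne h1]
    rw [hχ, sat_bigEx]
    constructor
    · rintro ⟨w, hw, hsat⟩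
      have hbodyiff : Sat EM w body ↔
          ((w (xi+3) = w 0) ∧ (w (yi+3) = w 1) ∧
           Sat EM w (tupFml 2 L3 B) ∧ Sat EM w ψ') := Iff.rfl
      rw [hbodyiff] at hsat
      obtain ⟨he1, he2, htup, hψsat⟩ := hsat
      have h0 : w 0 = x := by
        rw [hw 0 (by
          simp only [List.mem_cons]
          push_neg
          exact ⟨by omega, by omega, fun h => absurd (hL3ge 0 h) (by omega)⟩)]
        rfl
      have h1 : w 1 = y := by
        rw [hw 1 (by
          simp only [List.mem_cons]
          push_neg
          exact ⟨by omega, by omega, fun h => absurd (hL3ge 1 h) (by omega)⟩)]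
        rfl
      have h2 : w 2 = vcode := by
        rw [hw 2 (by
          simp only [List.mem_cons]
          push_neg
          exact ⟨by omega, by omega, fun h => absurd (hL3ge 2 h) (by omega)⟩)]
        rfl
      rw [sat_tupFml EM L3 2 B (by omega) hL3lt w, h2] at htup
      have hlist : List.map w L3 = List.map v₀ Lvars := by
        have hlen : (List.map w L3).length = (List.map v₀ Lvars).length := by
          simp [hL3]
        exact (tuple_inj _ _ _ hlen htup hvc)
      have hptwise : ∀ j ∈ Lvars, w (j + 3) = v₀ j := by
        have : List.map (w ∘ (· + 3)) Lvars = List.map v₀ Lvars := by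
          rw [← List.map_map]; exact hlist
        intro j hj
        exact (list_map_eq_iff _ _ Lvars).mp this j hj
      rw [hψ', show Sat EM w (ψ.rename (· + 3)) = SatIn EM Set.univ w (ψ.rename (· + 3))
        from rfl, satIn_rename EM Set.univ _ hinj ψ w] at hψsat
      refine (sat_congr EM ψ _ _ ?_).mp hψsat
      intro j hj
      have hjK : j ≤ K := le_trans (le_maxVar ψ j hj) hmvK
      by_cases hjx : j = xi
      · subst hjx
        show w (j + 3) = tgt j
        rw [htgt_xi, ← h0, ← he1]
      by_cases hjy : j = yi
      · subst hjy
        show w (j + 3) = tgt j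
        rw [htgt_yi, ← h1, ← he2]
      show w (j + 3) = tgt j
      rw [htgt_other j hjx hjy]
      exact hptwise j ((hmemLv j).mpr ⟨by omega, hjx, hjy⟩)
    · intro hsat
      set w : ℕ → M := fun k =>
        if k = xi + 3 then x else if k = yi + 3 then y
        else if k ∈ L3 then v₀ (k - 3) else val3 x y vcode k with hwdef
      have hwn : ∀ k, k ≠ xi + 3 → k ≠ yi + 3 → k ∉ L3 → w k = val3 x y vcode k := by
        intro k h1 h2 h3
        rw [hwdef]; simp only [h1, h2, if_neg, if_false]
        simp [h1, h2, h3]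
      have hw0 : w 0 = x := by
        rw [hwn 0 (by omega) (by omega) (fun h => absurd (hL3ge 0 h) (by omega))]; rfl
      have hw1 : w 1 = y := by
        rw [hwn 1 (by omega) (by omega) (fun h => absurd (hL3ge 1 h) (by omega))]; rfl
      have hw2 : w 2 = vcode := by
        rw [hwn 2 (by omega) (by omega) (fun h => absurd (hL3ge 2 h) (by omega))]; rfl
      have hwxi : w (xi + 3) = x := by rw [hwdef]; simp
      have hwyi : w (yi + 3) = y := by
        rw [hwdef]; simp only []
        rw [if_neg (by omega : yi + 3 ≠ xi + 3)]
        simp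
      have hwj : ∀ j ∈ Lvars, w (j + 3) = v₀ j := by
        intro j hj
        obtain ⟨hjlt, hjx, hjy⟩ := (hmemLv j).mp hj
        rw [hwdef]
        simp only []
        rw [if_neg (by omega : j + 3 ≠ xi + 3), if_neg (by omega : j + 3 ≠ yi + 3),
          if_pos ((hmemL3 (j+3)).mpr ⟨j, hj, rfl⟩)]
        simp
      refine ⟨w, ?_, ?_⟩
      · intro k hk
        simp only [List.mem_cons] at hk
        push_neg at hk
        exact hwn k hk.1 hk.2.1 hk.2.2
      · have hbodyiff : Sat EM w body ↔
            ((w (xi+3) = w 0) ∧ (w (yi+3) = w 1) ∧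
             Sat EM w (tupFml 2 L3 B) ∧ Sat EM w ψ') := Iff.rfl
        rw [hbodyiff]
        refine ⟨by rw [hwxi, hw0], by rw [hwyi, hw1], ?_, ?_⟩
        · rw [sat_tupFml EM L3 2 B (by omega) hL3lt w, hw2]
          have : List.map w L3 = List.map v₀ Lvars := by
            rw [hL3, List.map_map]
            exact (list_map_eq_iff _ _ Lvars).mpr hwj
          rw [this]
          exact hvc
        · rw [hψ', show Sat EM w (ψ.rename (· + 3)) = SatIn EM Set.univ w (ψ.rename (· + 3))
            from rfl, satIn_rename EM Set.univ _ hinj ψ w]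
          refine (sat_congr EM ψ _ _ ?_).mpr hsat
          intro j hj
          have hjK : j ≤ K := le_trans (le_maxVar ψ j hj) hmvK
          by_cases hjx : j = xi
          · subst hjx
            show w (j + 3) = _
            rw [hwxi, htgt_xi]
          by_cases hjy : j = yi
          · subst hjy
            show w (j + 3) = _
            rw [hwyi, htgt_yi]
          show w (j + 3) = tgt j
          rw [htgt_other j hjx hjy, hwj j ((hmemLv j).mpr ⟨by omega, hjx, hjy⟩)]
  have hCA : CollAx EM χ := hColl χ trivial hχfv
  obtain ⟨q, hq⟩ := hCA vcode p (fun x hx => by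
    obtain ⟨y, hy⟩ := hprem x hx
    exact ⟨y, (key x y).mpr hy⟩)
  refine ⟨q, fun x hx => ?_⟩
  obtain ⟨y, hy1, hy2⟩ := hq x hx
  exact ⟨y, hy1, (key x y).mp hy2⟩

end GenColl


section TV
open Fml
variable {M N : Type}

attribute [local instance] Classical.propDecidable

private lemma forall₂_map {α β γ : Type*} (R : β → γ → Prop) (g : α → β) (h : α → γ)
    (l : List α) (H : ∀ x ∈ l, R (g x) (h x)) : List.Forall₂ R (l.map g) (l.map h) := by
  induction l with
  | nil => simp
  | cons a l ih =>
      simp only [List.map]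
      exact List.Forall₂.cons (H a (by simp)) (ih (fun x hx => H x (by simp [hx])))

lemma tarski_vaught {EM : M → M → Prop} {EN : N → N → Prop} {f : M → N}
    (hM : SatDB0 EM) (hColl : CollScheme EM (fun _ => True)) (hf : ElemEmb EM EN f)
    (ψ : Fml) (ν : ℕ → N) (hν : ∀ k, ν k ∈ hull EN f) (i : ℕ) (a : N)
    (ha : Sat EN (Function.update ν i a) ψ) :
    ∃ a' ∈ hull EN f, Sat EN (Function.update ν i a') ψ := by
  classical
  have m0 := (db0_nonempty hM).some
  set K := max ψ.maxVar i + 1 with hKdef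
  have hiK : i < K := by omega
  have hmv : ψ.maxVar < K := by omega
  set X := K + 1 with hX
  set Pv := K + 2 with hPv
  set qv := K + 3 with hqv
  set B := K + 4 with hB
  set Lvars := (List.range (K+1)).filter (fun k => decide (k ≠ i)) with hLv
  have hmemLv : ∀ j, j ∈ Lvars ↔ (j < K + 1 ∧ j ≠ i) := by
    intro j; simp [hLv, List.mem_filter, List.mem_range]
  have hLvlt : ∀ k ∈ Lvars, k < B := by
    intro k hk; have := ((hmemLv k).mp hk).1; omega
  have hXLv : X ∉ Lvars := fun h => by have := ((hmemLv X).mp h).1; omega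
  have hiLv : i ∉ Lvars := fun h => absurd rfl ((hmemLv i).mp h).2
  -- the ground-model bounds of the parameters
  set m : ℕ → M := fun k => (hν k).choose with hm
  have hmprop : ∀ k, EN (ν k) (f (m k)) := fun k => (hν k).choose_spec
  obtain ⟨P, c, htupc, hcP⟩ := exists_code hM hf (Lvars.map m) (Lvars.map ν)
    (forall₂_map _ ν m Lvars (fun k _ => hmprop k))
  -- the formulas
  set θ := bigEx Lvars ((tupFml X Lvars B).and ψ) with hθ
  set θ'' := (Fml.ex i θ).imp θ with hθ''
  have hfvθ : θ.fv ⊆ {X, i} := by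
    intro k hk
    obtain ⟨hk1, hk2⟩ := fv_bigEx _ _ _ hk
    simp only [fv, Set.mem_union] at hk1
    simp only [Set.mem_insert_iff, Set.mem_singleton_iff]
    rcases hk1 with h | h
    · have := fv_tupFml Lvars X B (by omega) hLvlt h
      simp only [Set.mem_insert_iff, Set.mem_setOf_eq] at this
      rcases this with h | h
      · tauto
      · exact absurd h hk2
    · have hkK : k < K := lt_of_le_of_lt (le_maxVar ψ k h) hmv
      by_cases hki : k = i
      · tauto
      · exact absurd ((hmemLv k).mpr ⟨by omega, hki⟩) hk2
  have hfvθ'' : θ''.fv ⊆ {X, i} := by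
    intro k hk
    simp only [hθ'', fv, Set.mem_union, Set.mem_diff] at hk
    rcases hk with ⟨h, -⟩ | h
    · exact hfvθ h
    · exact hfvθ h
  -- collection in M
  have hgc := genColl hM hColl θ'' X i (by omega) (fun _ => m0) P ?prem
  case prem =>
    intro x hx
    by_cases hc : ∃ y', Sat EM
        (Function.update (Function.update (fun _ => m0) X x) i y') θ
    · obtain ⟨y', hy'⟩ := hc
      refine ⟨y', fun _ => hy'⟩
    · refine ⟨m0, fun h => ?_⟩
      exfalso
      apply hc
      have h' : ∃ y'', y'' ∈ Set.univ ∧ SatIn EM Set.univ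
          (Function.update (Function.update (Function.update (fun _ => m0) X x) i m0) i y'')
          θ := h
      obtain ⟨y'', -, hy''⟩ := h'
      rw [Function.update_idem] at hy''
      exact ⟨y'', hy''⟩
  obtain ⟨q, hq⟩ := hgc
  -- the transfer formula
  set Θ := Fml.all X ((Fml.mem X Pv).imp
    (Fml.ex i ((Fml.mem i qv).and θ''))) with hΘ
  have unfoldΘ : ∀ {α : Type} (E : α → α → Prop) (u : ℕ → α), Sat E u Θ ↔
      ∀ x, x ∈ Set.univ →
        (E (Function.update u X x X) (Function.update u X x Pv) →
          ∃ y, y ∈ Set.univ ∧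
            (E (Function.update (Function.update u X x) i y i)
               (Function.update (Function.update u X x) i y qv) ∧
             Sat E (Function.update (Function.update u X x) i y) θ'')) :=
    fun E u => Iff.rfl
  set v' : ℕ → M := fun k => if k = Pv then P else if k = qv then q else m0 with hv'
  have hv'Pv : v' Pv = P := by rw [hv']; simp
  have hv'qv : v' qv = q := by
    rw [hv']; simp only []
    rw [if_neg (by omega : qv ≠ Pv)]; simp
  have hΘM : Sat EM v' Θ := by
    rw [unfoldΘ]
    intro x _ hx
    rw [Function.update_self, Function.update_of_ne (by omega : Pv ≠ X), hv'Pv] at hx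
    obtain ⟨y, hy1, hy2⟩ := hq x hx
    refine ⟨y, trivial, ?_, ?_⟩
    · rw [Function.update_self, Function.update_of_ne (by omega : qv ≠ i),
        Function.update_of_ne (by omega : qv ≠ X), hv'qv]
      exact hy1
    · refine (sat_congr EM θ'' _ _ ?_).mp hy2
      intro k hk
      rcases hfvθ'' hk with h | h
      · subst h
        rw [Function.update_of_ne (by omega : X ≠ i), Function.update_self,
          Function.update_of_ne (by omega : X ≠ i), Function.update_self]
      · simp only [Set.mem_singleton_iff] at h
        subst h
        rw [Function.update_self, Function.update_self]
  have hΘN : Sat EN (f ∘ v') Θ := (hf Θ v').mp hΘM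
  rw [unfoldΘ] at hΘN
  have hcmem : EN (Function.update (f ∘ v') X c X) (Function.update (f ∘ v') X c Pv) := by
    rw [Function.update_self, Function.update_of_ne (by omega : Pv ≠ X)]
    show EN c (f (v' Pv))
    rw [hv'Pv]
    exact hcP
  obtain ⟨a', -, ha'q, ha'sat⟩ := hΘN c trivial hcmem
  rw [Function.update_self, Function.update_of_ne (by omega : qv ≠ i),
    Function.update_of_ne (by omega : qv ≠ X)] at ha'q
  have ha'hull : a' ∈ hull EN f := ⟨q, by rwa [show (f ∘ v') qv = f q by rw [Function.comp_apply, hv'qv]] at ha'q⟩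
  -- feed the hypothesis of θ''
  have hsat_exiθ : SatIn EN Set.univ
      (Function.update (Function.update (f ∘ v') X c) i a') (Fml.ex i θ) := by
    refine ⟨a, trivial, ?_⟩
    rw [Function.update_idem]
    -- Sat EN (upd (upd (f∘v') X c) i a) θ
    rw [hθ]
    have : Sat EN (Function.update (Function.update (f ∘ v') X c) i a) (bigEx Lvars ((tupFml X Lvars B).and ψ)) := by
      rw [sat_bigEx]
      set base := Function.update (Function.update (f ∘ v') X c) i a with hbase
      set w₁ : ℕ → N := fun k => if k ∈ Lvars then ν k else base k with hw₁
      have hw₁off : ∀ k, k ∉ Lvars → w₁ k = base k := by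
        intro k hk; rw [hw₁]; simp [hk]
      have hw₁on : ∀ k ∈ Lvars, w₁ k = ν k := by
        intro k hk; rw [hw₁]; simp [hk]
      refine ⟨w₁, hw₁off, ?_, ?_⟩
      · show Sat EN w₁ (tupFml X Lvars B)
        rw [sat_tupFml EN Lvars X B (by omega) hLvlt]
        have hwX : w₁ X = c := by
          rw [hw₁off X hXLv, hbase, Function.update_of_ne (by omega : X ≠ i),
            Function.update_self]
        rw [hwX]
        have : List.map w₁ Lvars = List.map ν Lvars :=
          (list_map_eq_iff _ _ Lvars).mpr hw₁on
        rw [this]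
        exact htupc
      · show Sat EN w₁ ψ
        refine (sat_congr EN ψ _ _ ?_).mpr ha
        intro k hk
        have hkK : k < K := lt_of_le_of_lt (le_maxVar ψ k hk) hmv
        by_cases hki : k = i
        · subst hki
          rw [hw₁off k hiLv, hbase, Function.update_self, Function.update_self]
        · have hkLv : k ∈ Lvars := (hmemLv k).mpr ⟨by omega, hki⟩
          rw [hw₁on k hkLv, Function.update_of_ne hki]
    exact this
  have ha'θ : Sat EN (Function.update (Function.update (f ∘ v') X c) i a') θ :=
    ha'sat hsat_exiθ
  -- decode
  rw [hθ, sat_bigEx] at ha'θ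
  obtain ⟨w₂, hw₂off, hw₂body⟩ := ha'θ
  have hw₂tup : Sat EN w₂ (tupFml X Lvars B) := hw₂body.1
  have hw₂ψ : Sat EN w₂ ψ := hw₂body.2
  have hw₂X : w₂ X = c := by
    rw [hw₂off X hXLv, Function.update_of_ne (by omega : X ≠ i), Function.update_self]
  rw [sat_tupFml EN Lvars X B (by omega) hLvlt, hw₂X] at hw₂tup
  have hlist : List.map w₂ Lvars = List.map ν Lvars := by
    have hlen : (List.map w₂ Lvars).length = (List.map ν Lvars).length := by simp
    exact tuple_inj _ _ _ hlen hw₂tup htupc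
  have hw₂on : ∀ k ∈ Lvars, w₂ k = ν k := (list_map_eq_iff _ _ Lvars).mp hlist
  refine ⟨a', ha'hull, ?_⟩
  refine (sat_congr EN ψ _ _ ?_).mp hw₂ψ
  intro k hk
  have hkK : k < K := lt_of_le_of_lt (le_maxVar ψ k hk) hmv
  by_cases hki : k = i
  · subst hki
    rw [hw₂off k hiLv, Function.update_self, Function.update_self]
  · have hkLv : k ∈ Lvars := (hmemLv k).mpr ⟨by omega, hki⟩
    rw [hw₂on k hkLv, Function.update_of_ne hki]

/-- (1) implies (3): full collection gives M* ≺ N. -/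
lemma coll_elemInTop {EM : M → M → Prop} {EN : N → N → Prop} {f : M → N}
    (hM : SatDB0 EM) (hColl : CollScheme EM (fun _ => True)) (hf : ElemEmb EM EN f) :
    ElemInTop EN (hull EN f) := by
  intro φ
  induction φ with
  | mem i j => intro v hv; exact Iff.rfl
  | eq i j => intro v hv; exact Iff.rfl
  | not φ ih =>
      intro v hv
      exact not_congr (ih v hv)
  | and φ ψ ih1 ih2 =>
      intro v hv
      exact and_congr (ih1 v hv) (ih2 v hv)
  | or φ ψ ih1 ih2 =>
      intro v hv
      exact or_congr (ih1 v hv) (ih2 v hv)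
  | imp φ ψ ih1 ih2 =>
      intro v hv
      exact imp_congr (ih1 v hv) (ih2 v hv)
  | all i φ ih =>
      intro v hv
      have hupd : ∀ a : N, a ∈ hull EN f → ∀ k, Function.update v i a k ∈ hull EN f := by
        intro a ha k
        by_cases hki : k = i
        · subst hki; rwa [Function.update_self]
        · rw [Function.update_of_ne hki]; exact hv k
      constructor
      · intro h
        have hall : ∀ b : N, Sat EN (Function.update v i b) φ := by
          by_contra hcon
          push_neg at hcon
          obtain ⟨b, hnb⟩ := hcon
          have hnb' : Sat EN (Function.update v i b) φ.not := hnb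
          obtain ⟨a', ha'hull, hsat'⟩ := tarski_vaught hM hColl hf φ.not v hv i b hnb'
          have : ¬ Sat EN (Function.update v i a') φ := hsat'
          exact this ((ih _ (hupd a' ha'hull)).mp (h a' ha'hull))
        exact fun b _ => hall b
      · intro h a ha
        exact (ih _ (hupd a ha)).mpr (h a trivial)
  | ex i φ ih =>
      intro v hv
      have hupd : ∀ a : N, a ∈ hull EN f → ∀ k, Function.update v i a k ∈ hull EN f := by
        intro a ha k
        by_cases hki : k = i
        · subst hki; rwa [Function.update_self]
        · rw [Function.update_of_ne hki]; exact hv k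
      constructor
      · rintro ⟨a, haS, hsat⟩
        exact ⟨a, trivial, (ih _ (hupd a haS)).mp hsat⟩
      · intro h
        have h' : ∃ a, a ∈ Set.univ ∧ SatIn EN Set.univ (Function.update v i a) φ := h
        obtain ⟨a, -, hsat⟩ := h'
        obtain ⟨a', ha'hull, hsat'⟩ := tarski_vaught hM hColl hf φ v hv i a hsat
        exact ⟨a', ha'hull, (ih _ (hupd a' ha'hull)).mpr hsat'⟩

end TV


section Ultra
open Fml
variable {M : Type} {I : Type}

attribute [local instance] Classical.propDecidable

/-- The ultrapower setoid. -/
def uSetoid (I : Type) (U : Ultrafilter I) (M : Type) : Setoid (I → M) where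
  r g h := {i | g i = h i} ∈ U
  iseqv := by
    refine ⟨fun g => ?_, fun {g h} hgh => ?_, fun {g h l} h1 h2 => ?_⟩
    · have : {i | g i = g i} = Set.univ := by ext i; simp
      rw [this]
      exact Filter.univ_mem
    · exact Filter.mem_of_superset hgh (fun i hi => (hi : g i = h i).symm)
    · exact Filter.mem_of_superset (Filter.inter_mem h1 h2)
        (fun i hi => (hi.1 : g i = h i).trans hi.2)

/-- Membership relation on the ultrapower. -/
def uE (U : Ultrafilter I) (EM : M → M → Prop) :
    Quotient (uSetoid I U M) → Quotient (uSetoid I U M) → Prop :=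
  Quotient.lift₂ (fun g h => {i | EM (g i) (h i)} ∈ U) (by
    intro g h g' h' hg hh
    refine propext ⟨fun hm => ?_, fun hm => ?_⟩
    · refine Filter.mem_of_superset (Filter.inter_mem (Filter.inter_mem hm hg) hh) ?_
      rintro i ⟨⟨h1, h2⟩, h3⟩
      simp only [Set.mem_setOf_eq] at h1 h2 h3 ⊢
      rw [← h2, ← h3]
      exact h1
    · refine Filter.mem_of_superset (Filter.inter_mem (Filter.inter_mem hm hg) hh) ?_
      rintro i ⟨⟨h1, h2⟩, h3⟩
      simp only [Set.mem_setOf_eq] at h1 h2 h3 ⊢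
      rw [h2, h3]
      exact h1)

/-- Łoś's theorem for the deep-embedded language. -/
lemma los (U : Ultrafilter I) (EM : M → M → Prop) (hne : Nonempty M) :
    ∀ (φ : Fml) (g : ℕ → (I → M)),
      Sat (uE U EM) (fun k => Quotient.mk (uSetoid I U M) (g k)) φ ↔
        {i | Sat EM (fun k => g k i) φ} ∈ U := by
  have hupd : ∀ (g : ℕ → (I → M)) (j : ℕ) (h : I → M),
      (Function.update (fun k => Quotient.mk (uSetoid I U M) (g k)) j
        (Quotient.mk (uSetoid I U M) h)) =
      fun k => Quotient.mk (uSetoid I U M) (Function.update g j h k) := by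
    intro g j h
    funext k
    by_cases hkj : k = j
    · subst hkj; rw [Function.update_self, Function.update_self]
    · rw [Function.update_of_ne hkj, Function.update_of_ne hkj]
  have hupd2 : ∀ (g : ℕ → (I → M)) (j : ℕ) (h : I → M) (i : I),
      (fun k => Function.update g j h k i) =
        Function.update (fun k => g k i) j (h i) := by
    intro g j h i
    funext k
    by_cases hkj : k = j
    · subst hkj; rw [Function.update_self, Function.update_self]
    · rw [Function.update_of_ne hkj, Function.update_of_ne hkj]
  intro φ
  induction φ with
  | mem j l => intro g; exact Iff.rfl
  | eq j l =>
      intro g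
      show Quotient.mk _ (g j) = Quotient.mk _ (g l) ↔ _
      rw [Quotient.eq]
      exact Iff.rfl
  | not φ ih =>
      intro g
      rw [show Sat (uE U EM) (fun k => Quotient.mk (uSetoid I U M) (g k)) φ.not ↔ ¬ Sat (uE U EM) (fun k => Quotient.mk (uSetoid I U M) (g k)) φ from Iff.rfl, ih g]
      have : {i | Sat EM (fun k => g k i) φ.not} = {i | Sat EM (fun k => g k i) φ}ᶜ := rfl
      rw [this, Ultrafilter.compl_mem_iff_notMem]
  | and φ ψ ih1 ih2 =>
      intro g
      rw [show Sat (uE U EM) (fun k => Quotient.mk (uSetoid I U M) (g k)) (φ.and ψ) ↔ (Sat (uE U EM) (fun k => Quotient.mk (uSetoid I U M) (g k)) φ ∧ Sat (uE U EM) (fun k => Quotient.mk (uSetoid I U M) (g k)) ψ) from Iff.rfl, ih1 g, ih2 g]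
      constructor
      · rintro ⟨h1, h2⟩
        exact Filter.mem_of_superset (Filter.inter_mem h1 h2) (fun i hi => ⟨hi.1, hi.2⟩)
      · intro h
        exact ⟨Filter.mem_of_superset h (fun i hi => hi.1),
          Filter.mem_of_superset h (fun i hi => hi.2)⟩
  | or φ ψ ih1 ih2 =>
      intro g
      rw [show Sat (uE U EM) (fun k => Quotient.mk (uSetoid I U M) (g k)) (φ.or ψ) ↔ (Sat (uE U EM) (fun k => Quotient.mk (uSetoid I U M) (g k)) φ ∨ Sat (uE U EM) (fun k => Quotient.mk (uSetoid I U M) (g k)) ψ) from Iff.rfl, ih1 g, ih2 g]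
      have : {i | Sat EM (fun k => g k i) (φ.or ψ)} =
          {i | Sat EM (fun k => g k i) φ} ∪ {i | Sat EM (fun k => g k i) ψ} := rfl
      rw [this, Ultrafilter.union_mem_iff]
  | imp φ ψ ih1 ih2 =>
      intro g
      rw [show Sat (uE U EM) (fun k => Quotient.mk (uSetoid I U M) (g k)) (φ.imp ψ) ↔ (Sat (uE U EM) (fun k => Quotient.mk (uSetoid I U M) (g k)) φ → Sat (uE U EM) (fun k => Quotient.mk (uSetoid I U M) (g k)) ψ) from Iff.rfl, ih1 g, ih2 g]
      constructor
      · intro h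
        by_cases hφ : {i | Sat EM (fun k => g k i) φ} ∈ U
        · exact Filter.mem_of_superset (Filter.inter_mem (h hφ) hφ)
            (fun i hi => fun _ => hi.1)
        · have : {i | Sat EM (fun k => g k i) φ}ᶜ ∈ U :=
            (Ultrafilter.compl_mem_iff_notMem).mpr hφ
          exact Filter.mem_of_superset this (fun i hi => fun hsat => absurd hsat hi)
      · intro h hφ
        exact Filter.mem_of_superset (Filter.inter_mem h hφ) (fun i hi => hi.1 hi.2)
  | all j φ ih =>
      intro g
      constructor
      · intro h
        by_contra hno
        have hc : {i | Sat EM (fun k => g k i) (Fml.all j φ)}ᶜ ∈ U :=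
          (Ultrafilter.compl_mem_iff_notMem).mpr hno
        set hwit : I → M := fun i =>
          if hh : ∃ b, ¬ Sat EM (Function.update (fun k => g k i) j b) φ
          then hh.choose else g 0 i with hwitdef
        have hsub : {i | Sat EM (fun k => g k i) (Fml.all j φ)}ᶜ ⊆
            {i | ¬ Sat EM (Function.update (fun k => g k i) j (hwit i)) φ} := by
          intro i hi
          simp only [Set.mem_compl_iff, Set.mem_setOf_eq] at hi ⊢
          have hex : ∃ b, ¬ Sat EM (Function.update (fun k => g k i) j b) φ := by
            by_contra hcon
            push_neg at hcon
            exact hi (fun b _ => hcon b)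
          rw [hwitdef]
          simp only [hex, dif_pos]
          exact hex.choose_spec
        have hmem : {i | ¬ Sat EM (Function.update (fun k => g k i) j (hwit i)) φ} ∈ U :=
          Filter.mem_of_superset hc hsub
        have hsat := h (Quotient.mk (uSetoid I U M) hwit) trivial
        rw [hupd g j hwit] at hsat
        rw [show SatIn (uE U EM) Set.univ
            (fun k => Quotient.mk (uSetoid I U M) (Function.update g j hwit k)) φ =
          Sat (uE U EM)
            (fun k => Quotient.mk (uSetoid I U M) (Function.update g j hwit k)) φ from rfl,
          ih] at hsat
        have : {i | Sat EM (fun k => Function.update g j hwit k i) φ} ∩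
            {i | ¬ Sat EM (Function.update (fun k => g k i) j (hwit i)) φ} ∈ U :=
          Filter.inter_mem hsat hmem
        obtain ⟨i, hi1, hi2⟩ := Filter.nonempty_of_mem this
        simp only [Set.mem_setOf_eq] at hi1 hi2
        rw [hupd2 g j hwit i] at hi1
        exact hi2 hi1
      · intro h A hA
        obtain ⟨hrep, hhrep⟩ := Quotient.exists_rep A
        rw [← hhrep, hupd g j hrep]
        rw [show SatIn (uE U EM) Set.univ
            (fun k => Quotient.mk (uSetoid I U M) (Function.update g j hrep k)) φ =
          Sat (uE U EM)
            (fun k => Quotient.mk (uSetoid I U M) (Function.update g j hrep k)) φ from rfl,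
          ih]
        refine Filter.mem_of_superset h ?_
        intro i hi
        have := hi (hrep i) trivial
        simp only [Set.mem_setOf_eq]
        rw [hupd2 g j hrep i]
        exact this
  | ex j φ ih =>
      intro g
      constructor
      · intro h
        have h' : ∃ A, A ∈ Set.univ ∧ SatIn (uE U EM) Set.univ
            (Function.update (fun k => Quotient.mk (uSetoid I U M) (g k)) j A) φ := h
        obtain ⟨A, -, hA⟩ := h'
        obtain ⟨hrep, hhrep⟩ := Quotient.exists_rep A
        rw [← hhrep, hupd g j hrep] at hA
        rw [show SatIn (uE U EM) Set.univ
            (fun k => Quotient.mk (uSetoid I U M) (Function.update g j hrep k)) φ =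
          Sat (uE U EM)
            (fun k => Quotient.mk (uSetoid I U M) (Function.update g j hrep k)) φ from rfl,
          ih] at hA
        refine Filter.mem_of_superset hA ?_
        intro i hi
        refine ⟨hrep i, trivial, ?_⟩
        rw [← hupd2 g j hrep i]
        exact hi
      · intro h
        set hwit : I → M := fun i =>
          if hh : ∃ b, Sat EM (Function.update (fun k => g k i) j b) φ
          then hh.choose else g 0 i with hwitdef
        have hsub : {i | Sat EM (fun k => g k i) (Fml.ex j φ)} ⊆
            {i | Sat EM (Function.update (fun k => g k i) j (hwit i)) φ} := by
          intro i hi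
          simp only [Set.mem_setOf_eq] at hi ⊢
          have h' : ∃ b, b ∈ Set.univ ∧
              SatIn EM Set.univ (Function.update (fun k => g k i) j b) φ := hi
          obtain ⟨b, -, hb⟩ := h'
          have hex : ∃ b, Sat EM (Function.update (fun k => g k i) j b) φ := ⟨b, hb⟩
          rw [hwitdef]
          simp only [hex, dif_pos]
          exact hex.choose_spec
        refine ⟨Quotient.mk (uSetoid I U M) hwit, trivial, ?_⟩
        rw [hupd g j hwit]
        rw [show SatIn (uE U EM) Set.univ
            (fun k => Quotient.mk (uSetoid I U M) (Function.update g j hwit k)) φ =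
          Sat (uE U EM)
            (fun k => Quotient.mk (uSetoid I U M) (Function.update g j hwit k)) φ from rfl,
          ih]
        refine Filter.mem_of_superset (Filter.mem_of_superset h hsub) ?_
        intro i hi
        simp only [Set.mem_setOf_eq] at hi ⊢
        rw [hupd2 g j hwit i]
        exact hi

/-- The diagonal embedding into the ultrapower. -/
def femb (U : Ultrafilter I) (M : Type) : M → Quotient (uSetoid I U M) :=
  fun m => Quotient.mk (uSetoid I U M) (fun _ => m)

lemma femb_elemEmb (U : Ultrafilter I) (EM : M → M → Prop) (hne : Nonempty M) :
    ElemEmb EM (uE U EM) (femb U M) := by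
  intro φ v
  have he : (femb U M) ∘ v = fun k => Quotient.mk (uSetoid I U M) ((fun k _ => v k) k) := rfl
  rw [he, los U EM hne φ (fun k _ => v k)]
  constructor
  · intro h
    have : {i : I | Sat EM (fun k => v k) φ} = Set.univ := by
      ext i
      simp only [Set.mem_setOf_eq, Set.mem_univ, iff_true]
      exact h
    rw [this]
    exact Filter.univ_mem
  · intro hmem
    by_contra h
    have : {i : I | Sat EM (fun k => v k) φ} = ∅ := by
      ext i
      simp only [Set.mem_setOf_eq, Set.mem_empty_iff_false, iff_false]
      exact h
    rw [this] at hmem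
    exact Ultrafilter.empty_notMem hmem

end Ultra


section Final
open Fml
variable {M : Type}

attribute [local instance] Classical.propDecidable

lemma elemInTop_coll {EM : M → M → Prop} (hM : SatDB0 EM)
    (h3 : ∀ (N : Type) (EN : N → N → Prop) (f : M → N), ElemEmb EM EN f →
      ElemInTop EN (hull EN f)) :
    CollScheme EM (fun _ => True) := by
  classical
  intro φ _ hfv v p hprem
  by_contra hno
  push_neg at hno
  letI : DecidableEq M := Classical.decEq M
  have hne : Nonempty M := db0_nonempty hM
  -- a selector giving, for each finite set of candidate bounds, a counterexample
  have hSel : ∀ t : Finset M, ∃ x, EM x p ∧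
      ∀ y m, m ∈ t → EM y m → ¬ Sat EM (val3 x y v) φ := by
    intro t
    obtain ⟨q, hq⟩ := db0_listBound hM t.toList
    obtain ⟨x, hx1, hx2⟩ := hno q
    exact ⟨x, hx1, fun y m hm hym =>
      hx2 y (hq m (by simpa using hm) y hym)⟩
  set g : Finset M → M := fun t => (hSel t).choose with hg
  have hgp : ∀ t, EM (g t) p := fun t => (hSel t).choose_spec.1
  have hgneg : ∀ t, ∀ y m, m ∈ t → EM y m → ¬ Sat EM (val3 (g t) y v) φ :=
    fun t => (hSel t).choose_spec.2
  -- ultrafilter extending the cofinal filter on finite subsets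
  haveI : (Filter.atTop : Filter (Finset M)).NeBot := Filter.atTop_neBot
  set U := Ultrafilter.of (Filter.atTop : Filter (Finset M)) with hU
  have hcone : ∀ m : M, {t : Finset M | m ∈ t} ∈ U := by
    intro m
    have h1 : {t : Finset M | {m} ≤ t} ∈ (Filter.atTop : Filter (Finset M)) :=
      Filter.mem_atTop {m}
    have h2 : {t : Finset M | {m} ≤ t} ∈ U := Ultrafilter.of_le _ h1
    refine Filter.mem_of_superset h2 ?_
    intro t ht
    simpa [Finset.singleton_subset_iff] using ht
  set EN := uE U EM with hEN
  set f := femb U (M := M) with hff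
  have hfE : ElemEmb EM EN f := femb_elemEmb U EM hne
  have hTop := h3 _ EN f hfE
  -- valuation in the ultrapower
  set G : ℕ → (Finset M) → M := fun k =>
    if k = 0 then g else if k = 2 then (fun _ => v) else (fun _ => p) with hG
  set w : ℕ → Quotient (uSetoid (Finset M) U M) :=
    fun k => Quotient.mk (uSetoid (Finset M) U M) (G k) with hw
  have hupd : ∀ (gg : ℕ → (Finset M) → M) (j : ℕ) (h : (Finset M) → M),
      (Function.update (fun k => Quotient.mk (uSetoid (Finset M) U M) (gg k)) j
        (Quotient.mk (uSetoid (Finset M) U M) h)) =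
      fun k => Quotient.mk (uSetoid (Finset M) U M) (Function.update gg j h k) := by
    intro gg j h
    funext k
    by_cases hkj : k = j
    · subst hkj; rw [Function.update_self, Function.update_self]
    · rw [Function.update_of_ne hkj, Function.update_of_ne hkj]
  have hG0 : G 0 = g := by simp [hG]
  have hG2 : G 2 = (fun _ => v) := by simp [hG]
  have hGo : ∀ k, k ≠ 0 → k ≠ 2 → G k = (fun _ => p) := by
    intro k h1 h2; simp [hG, h1, h2]
  have hgEp : EN (Quotient.mk (uSetoid (Finset M) U M) g) (f p) := by
    show {t : Finset M | EM (g t) p} ∈ U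
    exact Filter.mem_of_superset Filter.univ_mem (fun t _ => hgp t)
  have hwhull : ∀ k, w k ∈ hull EN f := by
    intro k
    by_cases h0 : k = 0
    · subst h0
      refine ⟨p, ?_⟩
      rw [hw]
      simp only [hG0]
      exact hgEp
    by_cases h2 : k = 2
    · subst h2
      have : w 2 = f v := by rw [hw]; simp only [hG2]; rfl
      rw [this]
      exact hull_mem_f hM hfE v
    · have : w k = f p := by rw [hw]; simp only [hGo k h0 h2]; rfl
      rw [this]
      exact hull_mem_f hM hfE p
  -- the existential is satisfied in N
  set hwit : Finset M → M := fun t => (hprem (g t) (hgp t)).choose with hwitdef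
  have hwitspec : ∀ t, Sat EM (val3 (g t) (hwit t) v) φ :=
    fun t => (hprem (g t) (hgp t)).choose_spec
  have hfv3 : ∀ k ∈ φ.fv, k = 0 ∨ k = 1 ∨ k = 2 := by
    intro k hk
    have := hfv hk
    simpa using this
  have hagree : ∀ (arep : Finset M → M) (t : Finset M), ∀ k ∈ φ.fv,
      Function.update G 1 arep k t = val3 (g t) (arep t) v k := by
    intro arep t k hk
    rcases hfv3 k hk with h | h | h
    · subst h
      rw [Function.update_of_ne (by omega : (0:ℕ) ≠ 1), hG0]; rfl
    · subst h
      rw [Function.update_self]; rfl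
    · subst h
      rw [Function.update_of_ne (by omega : (2:ℕ) ≠ 1), hG2]; rfl
  have hSatN : Sat EN w (Fml.ex 1 φ) := by
    refine ⟨Quotient.mk (uSetoid (Finset M) U M) hwit, trivial, ?_⟩
    have hwq : w = fun k => Quotient.mk (uSetoid (Finset M) U M) (G k) := rfl
    rw [hwq, hupd G 1 hwit]
    show Sat EN (fun k => Quotient.mk (uSetoid (Finset M) U M) (Function.update G 1 hwit k)) φ
    rw [hEN, los U EM hne φ _]
    refine Filter.mem_of_superset Filter.univ_mem (fun t _ => ?_)
    simp only [Set.mem_setOf_eq]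
    refine (sat_congr EM φ _ _ ?_).mpr (hwitspec t)
    intro k hk
    exact hagree hwit t k hk
  -- pull the witness into the hull
  have hSatInEx : SatIn EN (hull EN f) w (Fml.ex 1 φ) :=
    (hTop (Fml.ex 1 φ) w hwhull).mpr hSatN
  have h' : ∃ A, A ∈ hull EN f ∧
      SatIn EN (hull EN f) (Function.update w 1 A) φ := hSatInEx
  obtain ⟨A, hAhull, hAsat⟩ := h'
  have hupdhull : ∀ k, Function.update w 1 A k ∈ hull EN f := by
    intro k
    by_cases hk1 : k = 1
    · subst hk1; rwa [Function.update_self]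
    · rw [Function.update_of_ne hk1]; exact hwhull k
  have hASat' : Sat EN (Function.update w 1 A) φ := (hTop φ _ hupdhull).mp hAsat
  obtain ⟨mA, hmA⟩ := hAhull
  obtain ⟨arep, harep⟩ := Quotient.exists_rep A
  have hset1 : {t : Finset M | EM (arep t) mA} ∈ U := by
    rw [← harep] at hmA
    exact hmA
  have hset2 : {t : Finset M | Sat EM (fun k => Function.update G 1 arep k t) φ} ∈ U := by
    rw [← harep] at hASat'
    have hwq : w = fun k => Quotient.mk (uSetoid (Finset M) U M) (G k) := rfl
    rw [hwq, hupd G 1 arep] at hASat'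
    have : Sat EN (fun k => Quotient.mk (uSetoid (Finset M) U M)
        (Function.update G 1 arep k)) φ := hASat'
    rw [hEN, los U EM hne φ _] at this
    exact this
  obtain ⟨t, hti⟩ := Filter.nonempty_of_mem
    (Filter.inter_mem (Filter.inter_mem hset1 hset2) (hcone mA))
  obtain ⟨⟨ht1, ht2⟩, ht3⟩ := hti
  simp only [Set.mem_setOf_eq] at ht1 ht2 ht3
  have hsatt : Sat EM (val3 (g t) (arep t) v) φ :=
    (sat_congr EM φ _ _ (fun k hk => hagree arep t k hk)).mp ht2
  exact hgneg t (arep t) mA ht3 ht1 hsatt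

/-- The main theorem. -/
theorem full_coll_tfae' (M : Type) (EM : M → M → Prop) (hM : SatDB0 EM) :
    [CollScheme EM (fun _ => True),
     ∀ (N : Type) (EN : N → N → Prop) (f : M → N), ElemEmb EM EN f →
       ElemEmbInto EM EN f (hull EN f) ∧ ElemInTop EN (hull EN f),
     ∀ (N : Type) (EN : N → N → Prop) (f : M → N), ElemEmb EM EN f →
       ElemInTop EN (hull EN f)].TFAE := by
  tfae_have 1 → 3 := by
    intro h1 N EN f hf
    exact coll_elemInTop hM h1 hf
  tfae_have 3 → 2 := by
    intro h3 N EN f hf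
    have hTop := h3 N EN f hf
    refine ⟨?_, hTop⟩
    intro ψ w
    have hv : ∀ k, (f ∘ w) k ∈ hull EN f := fun k => hull_mem_f hM hf (w k)
    rw [hf ψ w]
    exact (hTop ψ (f ∘ w) hv).symm
  tfae_have 2 → 3 := by
    intro h2 N EN f hf
    exact (h2 N EN f hf).2
  tfae_have 3 → 1 := by
    intro h3
    exact elemInTop_coll hM h3
  tfae_finish

end Final


/-- For M ⊨ DB₀, TFAE:
(1) M satisfies the full collection schema Coll;
(2) for every elementary extension N of M, M ≺ M* and M* ≺ N;
(3) for every elementary extension N of M, M* ≺ N. -/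
theorem full_coll_tfae (M : Type) (EM : M → M → Prop) (hM : SatDB0 EM) :
    [CollScheme EM (fun _ => True),
     ∀ (N : Type) (EN : N → N → Prop) (f : M → N), ElemEmb EM EN f →
       ElemEmbInto EM EN f (hull EN f) ∧ ElemInTop EN (hull EN f),
     ∀ (N : Type) (EN : N → N → Prop) (f : M → N), ElemEmb EM EN f →
       ElemInTop EN (hull EN f)].TFAE := full_coll_tfae' M EM hM

end FOSet
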